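/- arXiv:2303.05723 — 6 statements merged into one kernel-verified Lean document; each statement's English description precedes it below -/
import Mathlib

section
/- Let G be a connected simple graph having at least one vertex of degree at least 2, and let P = {v ∈ V(G) : deg(v) = 1} be its set of pendant vertices. Then the stretch index of G equals the stretch index of the induced subgraph G[V ∖ P], i.e., σ(G) = σ(G ∖ P). -/
open SimpleGraph Set

variable {V : Type*}

/-- The degree of a vertex `v` in `G` (as the cardinality of its neighbor set). -/
noncomputable def vdeg (G : SimpleGraph V) (v : V) : ℕ := (G.neighborSet v).ncard

/-- The maximum degree `Δ(G)` of `G`. -/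
noncomputable def maxDeg (G : SimpleGraph V) : ℕ :=
  sSup (Set.range fun v => vdeg G v)

/-- The number of edges `|E(G)|` of `G`. -/
noncomputable def edgeCount (G : SimpleGraph V) : ℕ := G.edgeSet.ncard

/-- A graph `G` on `n` vertices is overfull if `|E(G)| > Δ(G) * ⌊n/2⌋`. -/
def IsOverfull (G : SimpleGraph V) : Prop :=
  edgeCount G > maxDeg G * (Nat.card V / 2)

/-- `G` is subgraph-overfull if it has a subgraph `H` with `Δ(H) = Δ(G)` that is overfull. -/
def IsSubgraphOverfull (G : SimpleGraph V) : Prop :=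
  ∃ (s : Set V) (H : SimpleGraph s),
    (∀ u v : s, H.Adj u v → G.Adj u.1 v.1) ∧ maxDeg H = maxDeg G ∧ IsOverfull H

/-- The closed neighborhood `N[v] = N(v) ∪ {v}` of a vertex `v`. -/
def closedNbhd (G : SimpleGraph V) (v : V) : Set V := insert v (G.neighborSet v)

/-- `G` is neighborhood-overfull if some vertex `v` of maximum degree is such that the
subgraph induced by its closed neighborhood `N[v]` is overfull. -/
def IsNbhdOverfull (G : SimpleGraph V) : Prop :=
  ∃ v, vdeg G v = maxDeg G ∧ IsOverfull (G.induce (closedNbhd G v))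

/-- A proper edge coloring of `G` with `n` colors: edges sharing a vertex get distinct colors. -/
def EdgeColorable (G : SimpleGraph V) (n : ℕ) : Prop :=
  ∃ c : G.edgeSet → Fin n, ∀ e f : G.edgeSet,
    e ≠ f → (∃ v, v ∈ (e : Sym2 V) ∧ v ∈ (f : Sym2 V)) → c e ≠ c f

/-- The chromatic index `χ'(G)`. -/
noncomputable def chromIndex (G : SimpleGraph V) : ℕ :=
  sInf {n | EdgeColorable G n}

/-- A proper total coloring of `G` with `n` colors: adjacent vertices get distinct colors,
edges sharing a vertex get distinct colors, and each vertex gets a color distinct from all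
its incident edges. -/
def TotalColorable (G : SimpleGraph V) (n : ℕ) : Prop :=
  ∃ (cv : V → Fin n) (ce : G.edgeSet → Fin n),
    (∀ u v, G.Adj u v → cv u ≠ cv v) ∧
    (∀ e f : G.edgeSet, e ≠ f → (∃ v, v ∈ (e : Sym2 V) ∧ v ∈ (f : Sym2 V)) → ce e ≠ ce f) ∧
    (∀ (v : V) (e : G.edgeSet), v ∈ (e : Sym2 V) → cv v ≠ ce e)

/-- The total chromatic number `χ''(G)`. -/
noncomputable def totalChrom (G : SimpleGraph V) : ℕ :=
  sInf {n | TotalColorable G n}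

/-- `T` is a tree `t`-spanner of `G`: a spanning tree of `G` in which any two vertices
adjacent in `G` are at distance at most `t`. -/
def IsTreeSpanner (G T : SimpleGraph V) (t : ℕ) : Prop :=
  T ≤ G ∧ T.IsTree ∧ ∀ u v, G.Adj u v → T.dist u v ≤ t

/-- The stretch index `σ(G)`: the least `t ≥ 1` such that `G` admits a tree `t`-spanner. -/
noncomputable def stretchIndex (G : SimpleGraph V) : ℕ :=
  sInf {t | 1 ≤ t ∧ ∃ T, IsTreeSpanner G T t}

/-- `(X, Y)` is a split partition of `G`: `X` is a clique, `Y` is an independent set,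
and they partition the vertex set. -/
def IsSplitPartition (G : SimpleGraph V) (X Y : Set V) : Prop :=
  X ∪ Y = Set.univ ∧ Disjoint X Y ∧ G.IsClique X ∧ ∀ u ∈ Y, ∀ v ∈ Y, ¬ G.Adj u v

/-- `G` is a split graph. -/
def IsSplitGraph (G : SimpleGraph V) : Prop := ∃ X Y, IsSplitPartition G X Y

/-- `X` is a maximal clique of `G`. -/
def IsMaximalClique (G : SimpleGraph V) (X : Set V) : Prop :=
  G.IsClique X ∧ ∀ X', G.IsClique X' → X ⊆ X' → X' = X

/-- `v` is a universal vertex of `G`: it is adjacent to every other vertex. -/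
def UniversalVertex (G : SimpleGraph V) (v : V) : Prop := ∀ u, u ≠ v → G.Adj v u

/-- `v` is universal in the subgraph of `G` induced by a set `s` of vertices. -/
def UniversalIn (G : SimpleGraph V) (s : Set V) (v : V) : Prop :=
  v ∈ s ∧ ∀ u ∈ s, u ≠ v → G.Adj v u

/-- The set of pendant (degree-one) vertices of `G`. -/
def pendants (G : SimpleGraph V) : Set V := {v | vdeg G v = 1}

/-- The matching number `α'(G)`: the maximum number of pairwise disjoint edges of `G`. -/
noncomputable def matchingNum (G : SimpleGraph V) : ℕ :=
  sSup {n | ∃ M : G.Subgraph, M.IsMatching ∧ M.edgeSet.ncard = n}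

/-- Any vertex on a cycle has two distinct neighbors. -/
lemma aux_cycle_two_nbrs {T : SimpleGraph V} {v w : V} {c : T.Walk v v}
    (hc : c.IsCycle) (hw : w ∈ c.support) :
    ∃ a b, a ≠ b ∧ T.Adj w a ∧ T.Adj w b := by
  classical
  have hd : (c.rotate w hw).IsCycle := hc.rotate hw
  set d := c.rotate w hw with hdef
  clear_value d
  cases d with
  | nil => exact absurd rfl hd.ne_nil
  | cons h e =>
    rename_i x
    rw [SimpleGraph.Walk.cons_isCycle_iff] at hd
    obtain ⟨hpath, hedge⟩ := hd
    obtain ⟨y, hy, e', he'⟩ := SimpleGraph.Walk.exists_eq_cons_of_ne h.ne e.reverse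
    refine ⟨x, y, ?_, h, hy⟩
    intro hxy
    apply hedge
    have : s(w, y) ∈ e.reverse.edges := by rw [he']; simp
    rw [SimpleGraph.Walk.edges_reverse, List.mem_reverse] at this
    subst hxy; exact this

/-- Any internal vertex of a path has two distinct neighbors. -/
lemma aux_path_two_nbrs {T : SimpleGraph V} {u v w : V} {p : T.Walk u v}
    (hp : p.IsPath) (hw : w ∈ p.support) (hwu : w ≠ u) (hwv : w ≠ v) :
    ∃ a b, a ≠ b ∧ T.Adj w a ∧ T.Adj w b := by
  obtain ⟨q, r, rfl⟩ := SimpleGraph.Walk.mem_support_iff_exists_append.mp hw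
  obtain ⟨a, ha, q', hq'⟩ := SimpleGraph.Walk.exists_eq_cons_of_ne hwu q.reverse
  obtain ⟨b, hb, r', hr'⟩ := SimpleGraph.Walk.exists_eq_cons_of_ne hwv r
  refine ⟨a, b, ?_, ha, hb⟩
  intro hab
  have haq : s(w, a) ∈ q.edges := by
    have : s(w, a) ∈ q.reverse.edges := by rw [hq']; simp
    rwa [SimpleGraph.Walk.edges_reverse, List.mem_reverse] at this
  have hbr : s(w, b) ∈ r.edges := by rw [hr']; simp
  have hnd := hp.isTrail.edges_nodup
  rw [SimpleGraph.Walk.edges_append] at hnd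
  exact (List.disjoint_of_nodup_append hnd) haq (hab ▸ hbr)

/-- Lift a walk whose support lies in `S` to a graph on the subtype. -/
lemma aux_lift {T : SimpleGraph V} {S : Set V} {H : SimpleGraph S}
    (hH : ∀ (a b : V) (ha : a ∈ S) (hb : b ∈ S), T.Adj a b → H.Adj ⟨a, ha⟩ ⟨b, hb⟩) :
    ∀ {u v : V} (p : T.Walk u v), (∀ w ∈ p.support, w ∈ S) → ∀ (hu : u ∈ S) (hv : v ∈ S),
      ∃ q : H.Walk ⟨u, hu⟩ ⟨v, hv⟩,
        q.support.map Subtype.val = p.support ∧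
        q.edges.map (Sym2.map Subtype.val) = p.edges ∧
        q.length = p.length := by
  intro u v p
  induction p with
  | nil =>
    intro _ hu hv
    exact ⟨SimpleGraph.Walk.nil, by simp, by simp, by simp⟩
  | cons h p ih =>
    rename_i a c d
    intro hs ha hd
    have hc : c ∈ S := hs c (by simp)
    obtain ⟨q, hq1, hq2, hq3⟩ := ih (fun w hw => hs w (by simp [hw])) hc hd
    exact ⟨SimpleGraph.Walk.cons (hH a c ha hc h) q, by simp [hq1], by simp [hq2], by simp [hq3]⟩
lemma aux_cycle_support_start {V : Type*} {T : SimpleGraph V} {v : V} (c : T.Walk v v) :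
    v ∈ c.support := c.start_mem_support

/-- Removing the pendant vertices of a connected graph (with a vertex of degree at least 2)
does not change the stretch index: `σ(G) = σ(G \ P)`. -/
theorem stmt0 [Fintype V] (G : SimpleGraph V) (hconn : G.Connected)
    (hdeg : ∃ v, 2 ≤ vdeg G v) :
    stretchIndex G = stretchIndex (G.induce (pendants G)ᶜ) := by
  classical
  obtain ⟨v₀, hv₀⟩ := hdeg
  set S : Set V := (pendants G)ᶜ with hSdef
  have hnp : ∀ {w x y : V}, x ≠ y → G.Adj w x → G.Adj w y → w ∈ S := by
    intro w x y hxy hx hy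
    have h2 : 1 < (G.neighborSet w).ncard :=
      (Set.one_lt_ncard (Set.toFinite _)).mpr ⟨x, hx, y, hy, hxy⟩
    rw [hSdef]
    intro hw
    simp only [pendants, Set.mem_setOf_eq] at hw
    unfold vdeg at hw
    omega
  have hv₀S : v₀ ∈ S := by
    rw [hSdef]
    intro hw
    simp only [pendants, Set.mem_setOf_eq] at hw
    omega
  unfold stretchIndex
  congr 1
  ext t
  simp only [Set.mem_setOf_eq]
  constructor
  · rintro ⟨ht, T, hTG, hTtree, hTd⟩
    have hsupp : ∀ {a b : V} (p : T.Walk a b), p.IsPath → a ∈ S → b ∈ S →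
        ∀ w ∈ p.support, w ∈ S := by
      intro a b p hp ha hb w hw
      by_cases hwa : w = a
      · exact hwa ▸ ha
      by_cases hwb : w = b
      · exact hwb ▸ hb
      obtain ⟨x, y, hxy, hx, hy⟩ := aux_path_two_nbrs hp hw hwa hwb
      exact hnp hxy (hTG hx) (hTG hy)
    refine ⟨ht, T.induce S, ?_, ⟨?_, ?_⟩, ?_⟩
    · intro a b hab
      exact hTG hab
    · rw [SimpleGraph.connected_iff]
      refine ⟨?_, ⟨⟨v₀, hv₀S⟩⟩⟩
      rintro ⟨a, ha⟩ ⟨b, hb⟩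
      obtain ⟨p0⟩ := hTtree.isConnected.preconnected a b
      have hps := hsupp p0.bypass p0.bypass_isPath ha hb
      obtain ⟨q, _, _, _⟩ := aux_lift (H := T.induce S)
        (fun a b ha hb h => h) p0.bypass hps ha hb
      exact ⟨q⟩
    · intro w c hc
      have hinj : Function.Injective (fun x : S => (x : V)) := Subtype.val_injective
      have := (SimpleGraph.Walk.map_isCycle_iff_of_injective
        (f := (⟨Subtype.val, fun {x y} h => h⟩ : T.induce S →g T)) hinj).mpr hc
      exact hTtree.IsAcyclic _ this
    · rintro ⟨a, ha⟩ ⟨b, hb⟩ hab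
      have hGab : G.Adj a b := hab
      obtain ⟨p, hp, hlen⟩ := (hTtree.isConnected.preconnected a b).exists_path_of_dist
      have hps := hsupp p hp ha hb
      obtain ⟨q, _, _, hq3⟩ := aux_lift (H := T.induce S)
        (fun a b ha hb h => h) p hps ha hb
      calc (T.induce S).dist ⟨a, ha⟩ ⟨b, hb⟩ ≤ q.length := SimpleGraph.dist_le q
        _ = p.length := hq3
        _ = T.dist a b := hlen
        _ ≤ t := hTd a b hGab
  · rintro ⟨ht, T', hT'G, hT'tree, hT'd⟩
    have hnbr : ∀ p, p ∈ pendants G → ∃ a, G.neighborSet p = {a} := by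
      intro p hp
      exact Set.ncard_eq_one.mp hp
    choose f hf using hnbr
    have hfadj : ∀ p (hp : p ∈ pendants G), G.Adj p (f p hp) := by
      intro p hp
      have : f p hp ∈ G.neighborSet p := by rw [hf p hp]; exact rfl
      exact this
    have hadj_eq : ∀ p (hp : p ∈ pendants G) {x : V}, G.Adj p x → x = f p hp := by
      intro p hp x hx
      have hx' : x ∈ G.neighborSet p := hx
      rw [hf p hp] at hx'
      exact hx'
    have hfS : ∀ p (hp : p ∈ pendants G), f p hp ∈ S := by
      intro p hp
      by_contra hq
      have hqP : f p hp ∈ pendants G := by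
        rw [hSdef] at hq
        simpa using hq
      have hqnb : ∀ {x : V}, G.Adj (f p hp) x → x = p := by
        intro x hx
        have h1 := hadj_eq _ hqP hx
        have h2 := hadj_eq _ hqP (hfadj p hp).symm
        rw [h1, ← h2]
      have key : ∀ (z w : V) (W : G.Walk z w), (z = p ∨ z = f p hp) → w = p ∨ w = f p hp := by
        intro z w W
        induction W with
        | nil => exact id
        | cons h W ih =>
          intro hz
          apply ih
          rcases hz with rfl | rfl
          · right; exact hadj_eq _ hp h
          · left; exact hqnb h
      obtain ⟨W⟩ := hconn.preconnected p v₀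
      have hP : v₀ ∈ pendants G := by
        rcases key p v₀ W (Or.inl rfl) with rfl | rfl
        · exact hp
        · exact hqP
      simp only [pendants, Set.mem_setOf_eq] at hP
      omega
    let T : SimpleGraph V :=
      { Adj := fun a b => (∃ (ha : a ∈ S) (hb : b ∈ S), T'.Adj ⟨a, ha⟩ ⟨b, hb⟩) ∨
          (∃ hp : a ∈ pendants G, b = f a hp) ∨ (∃ hp : b ∈ pendants G, a = f b hp)
        symm := by
          refine ⟨fun a b h => ?_⟩
          rcases h with ⟨ha, hb, h⟩ | h | h
          · exact Or.inl ⟨hb, ha, h.symm⟩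
          · exact Or.inr (Or.inr h)
          · exact Or.inr (Or.inl h)
        loopless := by
          refine ⟨fun a h => ?_⟩
          rcases h with ⟨ha, hb, h⟩ | ⟨hp, h⟩ | ⟨hp, h⟩
          · exact h.ne rfl
          · have := hfadj a hp; rw [← h] at this; exact this.ne rfl
          · have := hfadj a hp; rw [← h] at this; exact this.ne rfl }
    have hTle : T ≤ G := by
      intro a b h
      rcases h with ⟨ha, hb, h⟩ | ⟨hp, h⟩ | ⟨hp, h⟩
      · exact hT'G h
      · exact h ▸ hfadj a hp
      · exact (h ▸ hfadj b hp).symm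
    let φ : T' →g T := ⟨Subtype.val, fun {x y} h => Or.inl ⟨x.2, y.2, h⟩⟩
    have hH : ∀ (a b : V) (ha : a ∈ S) (hb : b ∈ S), T.Adj a b → T'.Adj ⟨a, ha⟩ ⟨b, hb⟩ := by
      intro a b ha hb h
      rcases h with ⟨ha', hb', h⟩ | ⟨hp, _⟩ | ⟨hp, _⟩
      · exact h
      · rw [hSdef] at ha; exact absurd hp ha
      · rw [hSdef] at hb; exact absurd hp hb
    refine ⟨ht, T, hTle, ⟨?_, ?_⟩, ?_⟩
    · rw [SimpleGraph.connected_iff]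
      have hreachS : ∀ x y (hx : x ∈ S) (hy : y ∈ S), T.Reachable x y := by
        intro x y hx hy
        obtain ⟨w⟩ := hT'tree.isConnected.preconnected ⟨x, hx⟩ ⟨y, hy⟩
        exact ⟨(w.map φ).copy rfl rfl⟩
      have hrep : ∀ a : V, ∃ b, b ∈ S ∧ T.Reachable a b := by
        intro a
        by_cases ha : a ∈ S
        · exact ⟨a, ha, SimpleGraph.Reachable.refl a⟩
        · have hp : a ∈ pendants G := by
            rw [hSdef] at ha
            simpa using ha
          exact ⟨f a hp, hfS a hp,
            ⟨SimpleGraph.Walk.cons (Or.inr (Or.inl ⟨hp, rfl⟩)) SimpleGraph.Walk.nil⟩⟩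
      refine ⟨?_, ⟨v₀⟩⟩
      intro a b
      obtain ⟨a', ha', ra⟩ := hrep a
      obtain ⟨b', hb', rb⟩ := hrep b
      exact ra.trans ((hreachS a' b' ha' hb').trans rb.symm)
    · intro w c hc
      have hcs : ∀ x ∈ c.support, x ∈ S := by
        intro x hx
        obtain ⟨a, b, hab, hxa, hxb⟩ := aux_cycle_two_nbrs hc hx
        exact hnp hab (hTle hxa) (hTle hxb)
      have hwS : w ∈ S := hcs w c.start_mem_support
      obtain ⟨q, hq1, hq2, hq3⟩ := aux_lift hH c hcs hwS hwS
      refine hT'tree.IsAcyclic q ⟨⟨⟨?_⟩, ?_⟩, ?_⟩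
      · have hnd := hc.isTrail.edges_nodup
        rw [← hq2] at hnd
        exact hnd.of_map _
      · intro hnil
        have h3 := hc.three_le_length
        rw [hnil] at hq3
        simp only [SimpleGraph.Walk.length_nil] at hq3
        omega
      · have hnd := hc.support_nodup
        rw [← hq1, ← List.map_tail] at hnd
        exact hnd.of_map _
    · intro a b hab
      by_cases ha : a ∈ pendants G
      · have hb' : b = f a ha := hadj_eq a ha hab
        have hT : T.Adj a b := Or.inr (Or.inl ⟨ha, hb'⟩)
        calc T.dist a b ≤ (SimpleGraph.Walk.cons hT SimpleGraph.Walk.nil).length :=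
              SimpleGraph.dist_le _
          _ = 1 := by simp
          _ ≤ t := ht
      by_cases hb : b ∈ pendants G
      · have ha' : a = f b hb := hadj_eq b hb hab.symm
        have hT : T.Adj a b := Or.inr (Or.inr ⟨hb, ha'⟩)
        calc T.dist a b ≤ (SimpleGraph.Walk.cons hT SimpleGraph.Walk.nil).length :=
              SimpleGraph.dist_le _
          _ = 1 := by simp
          _ ≤ t := ht
      · have haS : a ∈ S := by rw [hSdef]; simpa using ha
        have hbS : b ∈ S := by rw [hSdef]; simpa using hb
        have hab' : (G.induce S).Adj ⟨a, haS⟩ ⟨b, hbS⟩ := hab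
        have hd := hT'd _ _ hab'
        obtain ⟨p, hlen⟩ :=
          (hT'tree.isConnected.preconnected ⟨a, haS⟩ ⟨b, hbS⟩).exists_walk_length_eq_dist
        calc T.dist a b ≤ (p.map φ).length := SimpleGraph.dist_le _
          _ = p.length := SimpleGraph.Walk.length_map φ p
          _ = T'.dist _ _ := hlen
          _ ≤ t := hd
end

section
/- Let G = ((X,Y),E) be a connected split graph that is not a tree, with X a maximal clique and Y an independent set, such that every vertex y ∈ Y has degree d_G(y) > 1. Then σ(G) = 2 if and only if G has a universal vertex, i.e., a vertex adjacent to every other vertex of G. -/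
open SimpleGraph Set

variable {V : Type*}

section AuxLemmas

variable {T : SimpleGraph V}

private lemma noC3 (hA : T.IsAcyclic) {a b c : V} (h1 : T.Adj a b) (h2 : T.Adj b c)
    (h3 : T.Adj c a) : False := by
  refine hA _ (?_ : (Walk.cons h1 (Walk.cons h2 (Walk.cons h3 Walk.nil))).IsCycle)
  simp only [Walk.isCycle_def, Walk.isTrail_def, Walk.edges_cons, Walk.edges_nil,
    Walk.support_cons, Walk.support_nil, List.tail]
  simp_all [h1.ne, h2.ne, h3.ne, h1.ne', h2.ne', h3.ne', Sym2.eq, Sym2.rel_iff']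

private lemma noC4 (hA : T.IsAcyclic) {a b c d : V} (h1 : T.Adj a b) (h2 : T.Adj b c)
    (h3 : T.Adj c d) (h4 : T.Adj d a) (hac : a ≠ c) (hbd : b ≠ d) : False := by
  refine hA _ (?_ : (Walk.cons h1 (Walk.cons h2 (Walk.cons h3 (Walk.cons h4
    Walk.nil)))).IsCycle)
  simp only [Walk.isCycle_def, Walk.isTrail_def, Walk.edges_cons, Walk.edges_nil,
    Walk.support_cons, Walk.support_nil, List.tail]
  simp_all [h1.ne, h2.ne, h3.ne, h4.ne, hac, hbd, Sym2.eq, Sym2.rel_iff']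
  aesop

private lemma noC5 (hA : T.IsAcyclic) {a b c d e : V} (h1 : T.Adj a b) (h2 : T.Adj b c)
    (h3 : T.Adj c d) (h4 : T.Adj d e) (h5 : T.Adj e a) (hac : a ≠ c) (had : a ≠ d)
    (hbd : b ≠ d) (hbe : b ≠ e) (hce : c ≠ e) : False := by
  refine hA _ (?_ : (Walk.cons h1 (Walk.cons h2 (Walk.cons h3 (Walk.cons h4
    (Walk.cons h5 Walk.nil))))).IsCycle)
  simp only [Walk.isCycle_def, Walk.isTrail_def, Walk.edges_cons, Walk.edges_nil,
    Walk.support_cons, Walk.support_nil, List.tail]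
  simp_all [h1.ne, h2.ne, h3.ne, h4.ne, h5.ne, hac, had, hbd, hbe, hce, Sym2.eq, Sym2.rel_iff']
  aesop

private lemma noC6 (hA : T.IsAcyclic) {a b c d e f : V} (h1 : T.Adj a b) (h2 : T.Adj b c)
    (h3 : T.Adj c d) (h4 : T.Adj d e) (h5 : T.Adj e f) (h6 : T.Adj f a)
    (hac : a ≠ c) (had : a ≠ d) (hae : a ≠ e) (hbd : b ≠ d) (hbe : b ≠ e) (hbf : b ≠ f)
    (hce : c ≠ e) (hcf : c ≠ f) (hdf : d ≠ f) : False := by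
  refine hA _ (?_ : (Walk.cons h1 (Walk.cons h2 (Walk.cons h3 (Walk.cons h4
    (Walk.cons h5 (Walk.cons h6 Walk.nil)))))).IsCycle)
  simp only [Walk.isCycle_def, Walk.isTrail_def, Walk.edges_cons, Walk.edges_nil,
    Walk.support_cons, Walk.support_nil, List.tail]
  simp_all [h1.ne, h2.ne, h3.ne, h4.ne, h5.ne, h6.ne, hac, had, hae, hbd, hbe, hbf, hce, hcf,
    hdf, Sym2.eq, Sym2.rel_iff']
  aesop

private lemma walk_of_dist_le_two (hc : T.Connected) {u w : V} (h : T.dist u w ≤ 2) :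
    u = w ∨ T.Adj u w ∨ ∃ m, T.Adj u m ∧ T.Adj m w := by
  obtain ⟨p, hp⟩ := (hc u w).exists_walk_length_eq_dist
  rw [← hp] at h
  cases p with
  | nil => exact Or.inl rfl
  | cons h1 p2 =>
    cases p2 with
    | nil => exact Or.inr (Or.inl h1)
    | cons h2 p3 =>
      cases p3 with
      | nil => exact Or.inr (Or.inr ⟨_, h1, h2⟩)
      | cons h3 p4 => simp [Walk.length_cons] at h

/-- The spanning star centered at `v₀`. -/
private def starG (v₀ : V) : SimpleGraph V where
  Adj a b := a ≠ b ∧ (a = v₀ ∨ b = v₀)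
  symm := by constructor; intro a b ⟨h1, h2⟩; exact ⟨h1.symm, h2.symm⟩
  loopless := by constructor; intro a ⟨h1, _⟩; exact h1 rfl

private lemma starG_connected [Nonempty V] (v₀ : V) : (starG v₀).Connected := by
  rw [connected_iff]
  refine ⟨fun u w => ?_, inferInstance⟩
  have key : ∀ x : V, (starG v₀).Reachable x v₀ := by
    intro x
    rcases eq_or_ne x v₀ with h | h
    · exact h ▸ Reachable.refl x
    · exact (Adj.reachable ⟨h, Or.inr rfl⟩)
  exact (key u).trans (key w).symm

private lemma starG_path_unique (v₀ : V) : ∀ {u w : V} (p q : (starG v₀).Walk u w),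
    p.IsPath → q.IsPath → p = q := by
  intro u w p
  induction p with
  | nil =>
    intro q _ hq
    exact (Walk.isPath_iff_eq_nil.mp hq).symm
  | @cons u b w h p' ih =>
    intro q hp hq
    have hsecond : ∀ {x : V} (hx : (starG v₀).Adj u x) (r : (starG v₀).Walk x w),
        (Walk.cons hx r).IsPath → (u = v₀ → x = w ∧ r.Nil) ∧ (u ≠ v₀ → x = v₀) := by
      intro x hx r hr
      constructor
      · intro huv
        cases r with
        | nil => exact ⟨rfl, Walk.Nil.nil⟩
        | @cons x y w' h2 r' =>
          exfalso
          rcases h2.2 with h3 | h3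
          · exact hx.1 (huv.trans h3.symm)
          · have hysup : y ∈ (Walk.cons h2 r').support := by
              rw [Walk.support_cons]
              exact List.mem_cons_of_mem _ r'.start_mem_support
            have : u ∈ (Walk.cons h2 r').support := by
              rw [show u = y from huv.trans h3.symm]; exact hysup
            exact ((Walk.cons_isPath_iff hx _).mp hr).2 this
      · intro huv
        rcases hx.2 with h3 | h3
        · exact absurd h3 huv
        · exact h3
    cases q with
    | nil =>
      exfalso
      have := Walk.isPath_iff_eq_nil.mp hp
      simp at this
    | @cons u b' w h' q' =>
      rcases eq_or_ne u v₀ with huv | huv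
      · obtain ⟨hb, hl⟩ := (hsecond h p' hp).1 huv
        obtain ⟨hb', hl'⟩ := (hsecond h' q' hq).1 huv
        subst hb
        rw [hl.eq_nil]
        subst hb'
        rw [hl'.eq_nil]
      · have hb : b = v₀ := (hsecond h p' hp).2 huv
        have hb' : b' = v₀ := (hsecond h' q' hq).2 huv
        subst hb
        subst hb'
        rw [ih q' hp.of_cons hq.of_cons]

private lemma starG_isTree [Nonempty V] (v₀ : V) : (starG v₀).IsTree :=
  ⟨starG_connected v₀, isAcyclic_of_path_unique fun _ _ p q =>
    Subtype.ext (starG_path_unique v₀ p.1 q.1 p.2 q.2)⟩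

end AuxLemmas

/-- A connected split graph that is not a tree, in which every vertex of the independent set
has degree greater than 1, has stretch index 2 iff it has a universal vertex. -/
theorem stmt1 [Fintype V] (G : SimpleGraph V) (X Y : Set V)
    (hsplit : IsSplitPartition G X Y) (hmax : IsMaximalClique G X)
    (hconn : G.Connected) (htree : ¬ G.IsTree)
    (hY : ∀ y ∈ Y, 1 < vdeg G y) :
    stretchIndex G = 2 ↔ ∃ v, UniversalVertex G v := by
  obtain ⟨hunion, hdisj, hclX, hindY⟩ := hsplit
  haveI hVne : Nonempty V := hconn.nonempty
  constructor
  · -- forward direction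
    intro h2
    have hne : {t | 1 ≤ t ∧ ∃ T, IsTreeSpanner G T t}.Nonempty := by
      by_contra hc
      rw [Set.not_nonempty_iff_eq_empty] at hc
      rw [stretchIndex, hc, Nat.sInf_empty] at h2
      omega
    have hmem := Nat.sInf_mem hne
    rw [show sInf {t | 1 ≤ t ∧ ∃ T, IsTreeSpanner G T t} = stretchIndex G from rfl, h2] at hmem
    obtain ⟨-, T, hTle, hTtree, hTd⟩ := hmem
    have hTc : T.Connected := hTtree.1
    have hA : T.IsAcyclic := hTtree.2
    have hYnbrX : ∀ y ∈ Y, ∀ u, G.Adj y u → u ∈ X := by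
      intro y hy u hu
      have hm : u ∈ X ∪ Y := hunion ▸ Set.mem_univ u
      rcases hm with h | h
      · exact h
      · exact absurd hu (hindY y hy u h)
    have hXne : X.Nonempty := by
      by_contra hXe
      rw [Set.not_nonempty_iff_eq_empty] at hXe
      obtain ⟨v⟩ := hVne
      have hvY : v ∈ Y := by
        have hm : v ∈ X ∪ Y := hunion ▸ Set.mem_univ v
        rcases hm with h | h
        · exact absurd (hXe ▸ h) (Set.notMem_empty v)
        · exact h
      have h1 : 1 < (G.neighborSet v).ncard := hY v hvY
      have hnn : (G.neighborSet v).Nonempty := Set.nonempty_of_ncard_ne_zero (by omega)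
      obtain ⟨u, hu⟩ := hnn
      have : u ∈ X := hYnbrX v hvY u hu
      rw [hXe] at this
      exact Set.notMem_empty u this
    -- the center of X in T
    have hcenter : ∃ c, ∀ x ∈ X, x = c ∨ T.Adj c x := by
      by_cases hcl : ∀ x1 ∈ X, ∀ x2 ∈ X, x1 = x2 ∨ T.Adj x1 x2
      · obtain ⟨c, hcX0⟩ := hXne
        refine ⟨c, fun x hx => ?_⟩
        rcases hcl x hx c hcX0 with h | h
        · exact Or.inl h
        · exact Or.inr h.symm
      · push_neg at hcl
        obtain ⟨x1, hx1X, x2, hx2X, hn12, hnadj⟩ := hcl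
        have hd := walk_of_dist_le_two hTc (hTd x1 x2 (hclX hx1X hx2X hn12))
        rcases hd with h | h | ⟨m, hm1, hm2⟩
        · exact absurd h hn12
        · exact absurd h hnadj
        refine ⟨m, fun x3 hx3 => ?_⟩
        by_cases h31 : x3 = x1
        · exact Or.inr (show T.Adj m x3 by rw [h31]; exact hm1.symm)
        by_cases h32 : x3 = x2
        · exact Or.inr (show T.Adj m x3 by rw [h32]; exact hm2)
        by_contra hcon
        push_neg at hcon
        obtain ⟨hne3m, hnadj3m⟩ := hcon
        have hd1 := walk_of_dist_le_two hTc (hTd x3 x1 (hclX hx3 hx1X h31))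
        have hd2 := walk_of_dist_le_two hTc (hTd x3 x2 (hclX hx3 hx2X h32))
        rcases hd1 with h | h31a | ⟨w1, hw1a, hw1b⟩
        · exact h31 h
        · rcases hd2 with h | h32a | ⟨w2, hw2a, hw2b⟩
          · exact h32 h
          · exact noC4 hA h31a.symm h32a hm2.symm hm1.symm hn12 hne3m
          · by_cases hw2x1 : w2 = x1
            · exact hnadj (show T.Adj x1 x2 by rw [← hw2x1]; exact hw2b)
            by_cases hw2m : w2 = m
            · exact hnadj3m (show T.Adj m x3 by rw [← hw2m]; exact hw2a.symm)
            exact noC5 hA h31a.symm hw2a hw2b hm2.symm hm1.symm (Ne.symm hw2x1) hn12 h32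
              hne3m hw2m
        · rcases hd2 with h | h32a | ⟨w2, hw2a, hw2b⟩
          · exact h32 h
          · by_cases hw1x2 : w1 = x2
            · exact hnadj (show T.Adj x1 x2 by rw [← hw1x2]; exact hw1b.symm)
            by_cases hw1m : w1 = m
            · exact hnadj3m (show T.Adj m x3 by rw [← hw1m]; exact hw1a.symm)
            exact noC5 hA h32a.symm hw1a hw1b hm1 hm2 (Ne.symm hw1x2) (Ne.symm hn12) h31
              hne3m hw1m
          · by_cases hw1m : w1 = m
            · exact hnadj3m (show T.Adj m x3 by rw [← hw1m]; exact hw1a.symm)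
            by_cases hw2m : w2 = m
            · exact hnadj3m (show T.Adj m x3 by rw [← hw2m]; exact hw2a.symm)
            by_cases hw1x2 : w1 = x2
            · exact hnadj (show T.Adj x1 x2 by rw [← hw1x2]; exact hw1b.symm)
            by_cases hw2x1 : w2 = x1
            · exact hnadj (show T.Adj x1 x2 by rw [← hw2x1]; exact hw2b)
            by_cases hw12 : w1 = w2
            · exact noC4 hA hw1b.symm (show T.Adj w1 x2 by rw [hw12]; exact hw2b) hm2.symm
                hm1.symm hn12 hw1m
            · exact noC6 hA hw1b.symm hw1a.symm hw2a hw2b hm2.symm hm1.symm (Ne.symm h31)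
                (Ne.symm hw2x1) hn12 hw12 hw1x2 hw1m h32 hne3m hw2m
    obtain ⟨c, hc⟩ := hcenter
    -- the center lies in X, by maximality of the clique X
    have hcX : c ∈ X := by
      by_contra hcnX
      have hclq : G.IsClique (insert c X) := by
        intro a ha b hb hab
        rcases Set.mem_insert_iff.mp ha with rfl | haX
        · rcases Set.mem_insert_iff.mp hb with rfl | hbX
          · exact absurd rfl hab
          · rcases hc b hbX with rfl | hadj
            · exact absurd hbX hcnX
            · exact hTle hadj
        · rcases Set.mem_insert_iff.mp hb with rfl | hbX
          · rcases hc a haX with rfl | hadj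
            · exact absurd haX hcnX
            · exact (hTle hadj).symm
          · exact hclX haX hbX hab
      have hXX := hmax.2 _ hclq (Set.subset_insert c X)
      exact hcnX (hXX ▸ Set.mem_insert c X)
    -- c is universal
    refine ⟨c, fun u hu => ?_⟩
    have hm : u ∈ X ∪ Y := hunion ▸ Set.mem_univ u
    rcases hm with huX | huY
    · exact hclX hcX huX (Ne.symm hu)
    · have h1 : 1 < (G.neighborSet u).ncard := hY u huY
      obtain ⟨x1, x2, hx1m, hx2m, hx12⟩ := (Set.one_lt_ncard_iff (Set.toFinite _)).mp h1
      have ha1 : G.Adj u x1 := hx1m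
      have ha2 : G.Adj u x2 := hx2m
      have hx1X : x1 ∈ X := hYnbrX u huY x1 ha1
      have hx2X : x2 ∈ X := hYnbrX u huY x2 ha2
      by_cases hc1 : c = x1
      · exact (show G.Adj u c by rw [hc1]; exact ha1).symm
      by_cases hc2 : c = x2
      · exact (show G.Adj u c by rw [hc2]; exact ha2).symm
      have hT1 : T.Adj c x1 := by
        rcases hc x1 hx1X with h | h
        · exact absurd h.symm hc1
        · exact h
      have hT2 : T.Adj c x2 := by
        rcases hc x2 hx2X with h | h
        · exact absurd h.symm hc2
        · exact h
      have huc : u ≠ c := by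
        intro h
        exact (Set.disjoint_left.mp hdisj (show u ∈ X by rw [h]; exact hcX)) huY
      by_contra hng
      have hnTcu : ¬ T.Adj c u := fun h => hng (hTle h)
      have hnTuc : ¬ T.Adj u c := fun h => hnTcu h.symm
      have hux1 : u ≠ x1 := ha1.ne
      have hux2 : u ≠ x2 := ha2.ne
      have hd1 := walk_of_dist_le_two hTc (hTd u x1 ha1)
      have hd2 := walk_of_dist_le_two hTc (hTd u x2 ha2)
      rcases hd1 with h | hU1 | ⟨w1, hw1a, hw1b⟩
      · exact hux1 h
      · rcases hd2 with h | hU2 | ⟨w2, hw2a, hw2b⟩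
        · exact hux2 h
        · exact noC4 hA hU1 hT1.symm hT2 hU2.symm huc hx12
        · by_cases hw2x1 : w2 = x1
          · exact noC3 hA (show T.Adj x1 x2 by rw [← hw2x1]; exact hw2b) hT2.symm hT1
          by_cases hw2c : w2 = c
          · exact hnTuc (show T.Adj u c by rw [← hw2c]; exact hw2a)
          exact noC5 hA hU1 hT1.symm hT2 hw2b.symm hw2a.symm huc hux2 hx12
            (Ne.symm hw2x1) (Ne.symm hw2c)
      · rcases hd2 with h | hU2 | ⟨w2, hw2a, hw2b⟩
        · exact hux2 h
        · by_cases hw1x2 : w1 = x2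
          · exact noC3 hA (show T.Adj x2 x1 by rw [← hw1x2]; exact hw1b) hT1.symm hT2
          by_cases hw1c : w1 = c
          · exact hnTuc (show T.Adj u c by rw [← hw1c]; exact hw1a)
          exact noC5 hA hU2 hT2.symm hT1 hw1b.symm hw1a.symm huc hux1 (Ne.symm hx12)
            (Ne.symm hw1x2) (Ne.symm hw1c)
        · by_cases hw1c : w1 = c
          · exact hnTuc (show T.Adj u c by rw [← hw1c]; exact hw1a)
          by_cases hw2c : w2 = c
          · exact hnTuc (show T.Adj u c by rw [← hw2c]; exact hw2a)
          by_cases hw1x2 : w1 = x2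
          · exact noC3 hA (show T.Adj x2 x1 by rw [← hw1x2]; exact hw1b) hT1.symm hT2
          by_cases hw2x1 : w2 = x1
          · exact noC3 hA (show T.Adj x1 x2 by rw [← hw2x1]; exact hw2b) hT2.symm hT1
          by_cases hw12 : w1 = w2
          · exact noC4 hA hw1b hT1.symm hT2 (show T.Adj x2 w1 by rw [hw12]; exact hw2b.symm)
              hw1c hx12
          · exact noC6 hA hw1a hw1b hT1.symm hT2 hw2b.symm hw2a.symm hux1 huc hux2 hw1c
              hw1x2 hw12 hx12 (Ne.symm hw2x1) (Ne.symm hw2c)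
  · -- backward direction
    rintro ⟨v, hv⟩
    have h2mem : 2 ∈ {t | 1 ≤ t ∧ ∃ T, IsTreeSpanner G T t} := by
      refine ⟨by norm_num, starG v, ?_, starG_isTree v, ?_⟩
      · intro a b hab
        rcases hab.2 with h | h
        · subst h
          exact hv b (Ne.symm hab.1)
        · subst h
          exact (hv a hab.1).symm
      · intro a b hab
        by_cases hav : a = v
        · have hadj : (starG v).Adj a b := ⟨hab.ne, Or.inl hav⟩
          calc (starG v).dist a b ≤ (Walk.cons hadj Walk.nil).length := SimpleGraph.dist_le _
            _ ≤ 2 := by simp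
        by_cases hbv : b = v
        · have hadj : (starG v).Adj a b := ⟨hab.ne, Or.inr hbv⟩
          calc (starG v).dist a b ≤ (Walk.cons hadj Walk.nil).length := SimpleGraph.dist_le _
            _ ≤ 2 := by simp
        · have hadj1 : (starG v).Adj a v := ⟨hav, Or.inr rfl⟩
          have hadj2 : (starG v).Adj v b := ⟨Ne.symm hbv, Or.inl rfl⟩
          calc (starG v).dist a b ≤ (Walk.cons hadj1 (Walk.cons hadj2 Walk.nil)).length :=
                SimpleGraph.dist_le _
            _ ≤ 2 := by simp
    have h1not : (1 : ℕ) ∉ {t | 1 ≤ t ∧ ∃ T, IsTreeSpanner G T t} := by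
      rintro ⟨-, T, hTle, hTtree, hTd⟩
      apply htree
      have hGT : G = T := by
        refine le_antisymm (fun a b hab => ?_) hTle
        have hd := hTd a b hab
        have hr : T.dist a b ≠ 0 := fun h => hab.ne (hTtree.1.dist_eq_zero_iff.mp h)
        have h1 : T.dist a b = 1 := by omega
        exact SimpleGraph.dist_eq_one_iff_adj.mp h1
      rw [hGT]
      exact hTtree
    rw [stretchIndex]
    refine le_antisymm (Nat.sInf_le h2mem) (le_csInf ⟨2, h2mem⟩ ?_)
    intro b hb
    have hb1 : 1 ≤ b := hb.1
    have hbne : b ≠ 1 := fun h => h1not (h ▸ hb)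
    omega
end

section
/- Let G be a split graph. Then G is subgraph-overfull if and only if G is neighborhood-overfull. -/
open SimpleGraph Set

variable {V : Type*}

private lemma vdeg_le_maxDeg [Finite V] (G : SimpleGraph V) (v : V) :
    vdeg G v ≤ maxDeg G :=
  le_csSup (Set.Finite.bddAbove (Set.finite_range _)) ⟨v, rfl⟩

private lemma maxDeg_le [Finite V] (G : SimpleGraph V) {n : ℕ} (h : ∀ v, vdeg G v ≤ n) :
    maxDeg G ≤ n :=
  csSup_le' (by rintro _ ⟨v, rfl⟩; exact h v)

private lemma exists_vdeg_eq_maxDeg [Finite V] [Nonempty V] (G : SimpleGraph V) :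
    ∃ v, vdeg G v = maxDeg G :=
  Nat.sSup_mem (Set.range_nonempty (fun v => vdeg G v))
    (Set.Finite.bddAbove (Set.finite_range _))

private lemma vdeg_eq_degree {W : Type*} [Fintype W] (G : SimpleGraph W) [DecidableRel G.Adj]
    (v : W) : vdeg G v = G.degree v := by
  have h : ↑(G.neighborFinset v) = G.neighborSet v := by ext; simp
  have h2 := Set.ncard_coe_finset (G.neighborFinset v)
  rw [h] at h2
  rw [vdeg]
  exact h2

private lemma edgeCount_eq {W : Type*} (G : SimpleGraph W) [Fintype G.edgeSet] :
    edgeCount G = G.edgeFinset.card := by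
  have h : ↑G.edgeFinset = G.edgeSet := by ext; simp
  rw [edgeCount, ← h, Set.ncard_coe_finset]

private lemma handshake {W : Type*} [Fintype W] (G : SimpleGraph W) :
    ∑ w, vdeg G w = 2 * edgeCount G := by
  classical
  rw [edgeCount_eq, ← SimpleGraph.sum_degrees_eq_twice_card_edges]
  exact Finset.sum_congr rfl fun w _ => vdeg_eq_degree G w

private lemma image_neighborSet_induce (G : SimpleGraph V) (s : Set V) (u : ↥s) :
    Subtype.val '' (G.induce s).neighborSet u = G.neighborSet u.1 ∩ s := by
  ext x
  constructor
  · rintro ⟨w, hw, rfl⟩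
    exact ⟨hw, w.2⟩
  · rintro ⟨hadj, hx⟩
    exact ⟨⟨x, hx⟩, hadj, rfl⟩

private lemma vdeg_subtype_le [Finite V] {s : Set V} (G : SimpleGraph V) (H : SimpleGraph s)
    (h : ∀ a b : s, H.Adj a b → G.Adj a.1 b.1) (u : s) : vdeg H u ≤ vdeg G u.1 := by
  rw [vdeg, vdeg, ← Set.ncard_image_of_injective (H.neighborSet u) Subtype.val_injective]
  exact Set.ncard_le_ncard (by rintro x ⟨w, hw, rfl⟩; exact h u w hw) (Set.toFinite _)

private lemma vdeg_induce_self [Finite V] (G : SimpleGraph V) (s : Set V) (v : V)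
    (hv : v ∈ s) (hsub : G.neighborSet v ⊆ s) :
    vdeg (G.induce s) ⟨v, hv⟩ = vdeg G v := by
  rw [vdeg, vdeg, ← Set.ncard_image_of_injective _ Subtype.val_injective,
    image_neighborSet_induce]
  congr 1
  exact Set.inter_eq_left.mpr hsub

private lemma int_prod_nonneg (m : ℤ) : 0 ≤ m * (m - 1) := by
  rcases le_or_gt m 0 with h | h
  · nlinarith
  · nlinarith

private lemma split_count {W : Type*} [Fintype W] [DecidableEq W] (G : SimpleGraph W)
    [DecidableRel G.Adj] (A : Finset W)
    (hX : ∀ u ∈ A, ∀ v ∈ A, u ≠ v → G.Adj u v)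
    (hY : ∀ u v : W, u ∉ A → v ∉ A → ¬ G.Adj u v)
    (D : ℕ) (hD : ∀ w, G.degree w ≤ D) :
    2 * G.edgeFinset.card + A.card * (A.card - 1) ≤ 2 * (A.card * D) := by
  have hdegY : ∀ w ∈ Aᶜ, G.degree w = (A.filter (fun u => G.Adj w u)).card := by
    intro w hw
    unfold SimpleGraph.degree
    congr 1
    ext u
    simp only [SimpleGraph.mem_neighborFinset, Finset.mem_filter]
    constructor
    · intro h
      refine ⟨?_, h⟩
      by_contra hu
      exact hY w u (Finset.mem_compl.mp hw) hu h
    · exact fun h => h.2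
  have hdegX : ∀ x ∈ A, G.degree x = (A.card - 1) + (Aᶜ.filter (fun u => G.Adj x u)).card := by
    intro x hx
    have hsplit : G.neighborFinset x = (A.erase x) ∪ (Aᶜ.filter (fun u => G.Adj x u)) := by
      ext u
      simp only [SimpleGraph.mem_neighborFinset, Finset.mem_union, Finset.mem_erase,
        Finset.mem_filter, Finset.mem_compl]
      constructor
      · intro h
        by_cases hu : u ∈ A
        · exact Or.inl ⟨fun he => G.irrefl (he ▸ h), hu⟩
        · exact Or.inr ⟨hu, h⟩
      · rintro (⟨hne, hu⟩ | ⟨_, h⟩)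
        · exact hX x hx u hu (fun he => hne he.symm)
        · exact h
    have hdisj : Disjoint (A.erase x) (Aᶜ.filter (fun u => G.Adj x u)) := by
      rw [Finset.disjoint_left]
      intro u hu hu'
      exact (Finset.mem_compl.mp (Finset.mem_filter.mp hu').1) (Finset.mem_of_mem_erase hu)
    unfold SimpleGraph.degree
    rw [hsplit, Finset.card_union_of_disjoint hdisj, Finset.card_erase_of_mem hx]
  have hswap : ∑ w ∈ Aᶜ, (A.filter (fun u => G.Adj w u)).card
      = ∑ x ∈ A, (Aᶜ.filter (fun u => G.Adj x u)).card := by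
    simp only [Finset.card_filter]
    rw [Finset.sum_comm]
    refine Finset.sum_congr rfl fun x _ => Finset.sum_congr rfl fun w _ => ?_
    exact if_congr (G.adj_comm w x) rfl rfl
  have hsumY : ∑ w ∈ Aᶜ, G.degree w = ∑ x ∈ A, (Aᶜ.filter (fun u => G.Adj x u)).card := by
    rw [Finset.sum_congr rfl hdegY]; exact hswap
  have hsumX : ∑ x ∈ A, G.degree x ≤ A.card * D := by
    have := Finset.sum_le_card_nsmul A (fun x => G.degree x) D (fun x _ => hD x)
    simpa using this
  have htotal : ∑ x ∈ A, G.degree x + ∑ w ∈ Aᶜ, G.degree w = ∑ w, G.degree w :=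
    Finset.sum_add_sum_compl A _
  have hhs := SimpleGraph.sum_degrees_eq_twice_card_edges G
  have hkey : ∑ x ∈ A, G.degree x
      = A.card * (A.card - 1) + ∑ x ∈ A, (Aᶜ.filter (fun u => G.Adj x u)).card := by
    rw [Finset.sum_congr rfl hdegX, Finset.sum_add_distrib, Finset.sum_const, smul_eq_mul]
  omega

/-- A split graph is subgraph-overfull iff it is neighborhood-overfull. -/
theorem stmt4 [Fintype V] (G : SimpleGraph V) (hsplit : IsSplitGraph G) :
    IsSubgraphOverfull G ↔ IsNbhdOverfull G := by
  classical
  constructor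
  · rintro ⟨s, H, hHG, hmaxH, hover⟩
    obtain ⟨X, Y, hXY, -, hXc, hYi⟩ := hsplit
    haveI : Fintype ↥s := Fintype.ofFinite _
    set Δ := maxDeg G with hΔdef
    -- s is nonempty
    have hne : Nonempty ↥s := by
      by_contra h
      haveI := not_nonempty_iff.mp h
      have h0 : edgeCount H = 0 := by
        rw [edgeCount]
        convert Set.ncard_empty (Sym2 ↥s)
        rw [Set.eq_empty_iff_forall_notMem]
        intro e _
        induction e using Sym2.ind with
        | _ x y => exact isEmptyElim x
      rw [IsOverfull, h0] at hover
      exact Nat.not_lt_zero _ hover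
    -- move to the induced graph
    have hle : H ≤ G.induce s := fun a b hab => hHG a b hab
    have hE1 : edgeCount H ≤ edgeCount (G.induce s) :=
      Set.ncard_le_ncard (SimpleGraph.edgeSet_mono hle) (Set.toFinite _)
    have hmax1 : maxDeg (G.induce s) ≤ Δ :=
      maxDeg_le _ fun u => (vdeg_subtype_le G _ (fun a b h => h) u).trans (vdeg_le_maxDeg G u.1)
    have hmax2 : Δ ≤ maxDeg (G.induce s) := by
      rw [← hmaxH]
      refine maxDeg_le _ fun u => ?_
      calc vdeg H u ≤ vdeg (G.induce s) u :=
            Set.ncard_le_ncard (fun w hw => hle hw) (Set.toFinite _)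
        _ ≤ maxDeg (G.induce s) := vdeg_le_maxDeg _ _
    have hmax' : maxDeg (G.induce s) = Δ := le_antisymm hmax1 hmax2
    have hover' : edgeCount (G.induce s) > Δ * (Nat.card ↥s / 2) := by
      rw [IsOverfull, hmaxH] at hover
      exact lt_of_lt_of_le hover hE1
    -- handshake bound
    have hhs : ∑ w : ↥s, vdeg (G.induce s) w = 2 * edgeCount (G.induce s) := handshake _
    have hsum : 2 * edgeCount (G.induce s) ≤ Nat.card ↥s * Δ := by
      rw [← hhs, Nat.card_eq_fintype_card, ← Finset.card_univ]
      have := Finset.sum_le_card_nsmul Finset.univ (fun w => vdeg (G.induce s) w) Δ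
        (fun w _ => (vdeg_subtype_le G _ (fun a b h => h) w).trans (vdeg_le_maxDeg G w.1))
      simpa using this
    -- n is odd
    obtain ⟨k, hk⟩ : ∃ k, Nat.card ↥s = 2 * k + 1 := by
      rcases Nat.even_or_odd (Nat.card ↥s) with ⟨m, hm⟩ | ⟨m, hm⟩
      · exfalso
        rw [hm] at hover' hsum
        have h2 : (m + m) / 2 = m := by omega
        rw [h2] at hover'
        nlinarith
      · exact ⟨m, hm⟩
    have hk2 : Nat.card ↥s / 2 = k := by omega
    rw [hk2] at hover'
    -- Δ ≤ 2k
    have hΔle : Δ ≤ 2 * k := by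
      obtain ⟨u, hu⟩ := exists_vdeg_eq_maxDeg (G.induce s)
      rw [hmax'] at hu
      have hsub1 : insert u ((G.induce s).neighborSet u) ⊆ Set.univ := Set.subset_univ _
      have hc : (insert u ((G.induce s).neighborSet u)).ncard
          = vdeg (G.induce s) u + 1 :=
        Set.ncard_insert_of_notMem (fun h => (G.induce s).irrefl h) (Set.toFinite _)
      have := Set.ncard_le_ncard hsub1 (Set.toFinite _)
      rw [hc, Set.ncard_univ, hu, hk] at this
      omega
    -- split counting
    have hcount : ∃ a : ℕ, 2 * edgeCount (G.induce s) + a * (a - 1) ≤ 2 * (a * Δ) := by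
      set A : Finset ↥s := Finset.univ.filter (fun w => w.1 ∈ X) with hA
      refine ⟨A.card, ?_⟩
      rw [edgeCount_eq]
      apply split_count
      · intro u hu w hw hne'
        have hu' : u.1 ∈ X := (Finset.mem_filter.mp hu).2
        have hw' : w.1 ∈ X := (Finset.mem_filter.mp hw).2
        exact hXc hu' hw' (fun h => hne' (Subtype.ext h))
      · intro u w hu hw hadj
        have hu' : u.1 ∈ Y := by
          have : u.1 ∉ X := fun h => hu (Finset.mem_filter.mpr ⟨Finset.mem_univ _, h⟩)
          have h2 : u.1 ∈ X ∪ Y := hXY ▸ Set.mem_univ _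
          exact h2.resolve_left this
        have hw' : w.1 ∈ Y := by
          have : w.1 ∉ X := fun h => hw (Finset.mem_filter.mpr ⟨Finset.mem_univ _, h⟩)
          have h2 : w.1 ∈ X ∪ Y := hXY ▸ Set.mem_univ _
          exact h2.resolve_left this
        exact hYi u.1 hu' w.1 hw' hadj
      · intro w
        rw [← vdeg_eq_degree]
        exact (vdeg_subtype_le G _ (fun a b h => h) w).trans (vdeg_le_maxDeg G w.1)
    obtain ⟨a, hcnt⟩ := hcount
    -- Δ = 2k
    have hΔeq : Δ = 2 * k := by
      have hE2 : Δ * k + 1 ≤ edgeCount (G.induce s) := hover'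
      rcases Nat.eq_zero_or_pos a with rfl | ha
      · simp at hcnt; omega
      have h1 : (1:ℕ) ≤ a := ha
      refine le_antisymm hΔle ?_
      by_contra hlt
      push_neg at hlt
      have hz : (2:ℤ) * (Δ * k) + 2 + a * (a - 1) ≤ 2 * (a * Δ) := by
        have : 2 * (Δ * k) + 2 + a * (a - 1) ≤ 2 * (a * Δ) := by
          have := hcnt
          nlinarith
        zify [h1] at this ⊢
        linarith
      have hint := int_prod_nonneg ((a : ℤ) - Δ)
      have hΔlt : (Δ:ℤ) + 1 ≤ 2 * k := by exact_mod_cast hlt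
      nlinarith [hz, hint, hΔlt]
    -- extract universal vertex
    obtain ⟨u, hu⟩ := exists_vdeg_eq_maxDeg (G.induce s)
    rw [hmax', hΔeq] at hu
    have husub : (G.induce s).neighborSet u ⊆ Set.univ \ {u} := by
      intro w hw
      refine ⟨trivial, ?_⟩
      intro h
      rw [Set.mem_singleton_iff] at h
      subst h
      exact (G.induce s).irrefl hw
    have hcompl : (Set.univ \ {u} : Set ↥s).ncard = 2 * k := by
      rw [Set.ncard_diff_singleton_of_mem (Set.mem_univ u), Set.ncard_univ, hk]
      omega
    have hNeq : (G.induce s).neighborSet u = Set.univ \ {u} :=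
      Set.eq_of_subset_of_ncard_le husub (by rw [hcompl]; exact le_of_eq hu.symm)
        (Set.toFinite _)
    have huniv : ∀ w : ↥s, w ≠ u → G.Adj u.1 w.1 := by
      intro w hw
      have : w ∈ (G.induce s).neighborSet u := by
        rw [hNeq]
        exact ⟨trivial, by simpa using hw⟩
      exact this
    have hdegv : vdeg G u.1 = Δ := by
      refine le_antisymm (vdeg_le_maxDeg _ _) ?_
      calc Δ = vdeg (G.induce s) u := by rw [hu, hΔeq]
        _ ≤ vdeg G u.1 := vdeg_subtype_le G _ (fun a b h => h) u
    have hsub : s ⊆ closedNbhd G u.1 := by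
      intro x hx
      by_cases hxv : x = u.1
      · rw [hxv]; exact Set.mem_insert _ _
      · refine Set.mem_insert_of_mem _ ?_
        exact (huniv ⟨x, hx⟩ (fun h => hxv (congrArg Subtype.val h)) : G.Adj u.1 x)
    have hncc : (closedNbhd G u.1).ncard = 2 * k + 1 := by
      have hnm : u.1 ∉ G.neighborSet u.1 := fun h => G.irrefl h
      rw [closedNbhd, Set.ncard_insert_of_notMem hnm (Set.toFinite _)]
      show vdeg G u.1 + 1 = 2 * k + 1
      omega
    have hncs : s.ncard = 2 * k + 1 := by
      rw [← Nat.card_coe_set_eq, hk]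
    have hseq : s = closedNbhd G u.1 :=
      Set.eq_of_subset_of_ncard_le hsub (by rw [hncc, hncs]) (Set.toFinite _)
    refine ⟨u.1, hdegv, ?_⟩
    rw [← hseq]
    show edgeCount _ > maxDeg _ * (Nat.card ↥s / 2)
    rw [hmax', hk2]
    exact hover'
  · rintro ⟨v, hv, hov⟩
    refine ⟨closedNbhd G v, G.induce _, fun a b h => h, ?_, hov⟩
    apply le_antisymm
    · exact maxDeg_le _ fun u =>
        (vdeg_subtype_le G _ (fun a b h => h) u).trans (vdeg_le_maxDeg G u.1)
    · rw [← hv]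
      calc vdeg G v
          = vdeg (G.induce (closedNbhd G v)) ⟨v, Set.mem_insert _ _⟩ :=
            (vdeg_induce_self G _ v (Set.mem_insert _ _)
              (fun x hx => Set.mem_insert_of_mem _ hx)).symm
        _ ≤ maxDeg _ := vdeg_le_maxDeg _ _
end

section
/- Let G = (V,E) be a simple graph such that |V| is even and G has a universal vertex. Then G is Class 1, i.e., χ'(G) = Δ(G). -/
/-!
The universal vertex `v` has degree `n - 1`, the largest possible, so `Δ(G) = n - 1`, and the
`n - 1` edges at `v` force `χ'(G) ≥ n - 1`. Conversely, for `n` even the complete graph `K_n`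
has an `(n - 1)`-edge-coloring (the circle method of round-robin tournaments), and it restricts
to `G`.
-/

open SimpleGraph Set

variable {V : Type*}

lemma vdeg_lt_card [Finite V] (G : SimpleGraph V) (v : V) : vdeg G v < Nat.card V :=
  Set.ncard_lt_card fun h => G.notMem_neighborSet_self (h ▸ Set.mem_univ v)

lemma UniversalVertex.neighborSet_eq {G : SimpleGraph V} {v : V} (hv : UniversalVertex G v) :
    G.neighborSet v = {v}ᶜ :=
  Set.ext fun u => ⟨fun h => (G.ne_of_adj h).symm, hv u⟩

lemma UniversalVertex.vdeg_eq [Finite V] {G : SimpleGraph V} {v : V}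
    (hv : UniversalVertex G v) : vdeg G v = Nat.card V - 1 := by
  rw [vdeg, hv.neighborSet_eq, Set.ncard_compl, Set.ncard_singleton]

lemma UniversalVertex.maxDeg_eq [Finite V] {G : SimpleGraph V} {v : V}
    (hv : UniversalVertex G v) : maxDeg G = vdeg G v := by
  refine IsGreatest.csSup_eq ⟨Set.mem_range_self v, Set.forall_mem_range.2 fun u => ?_⟩
  have := vdeg_lt_card G u
  rw [hv.vdeg_eq]
  omega

lemma EdgeColorable.vdeg_le {G : SimpleGraph V} {n : ℕ} (h : EdgeColorable G n) (v : V) :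
    vdeg G v ≤ n := by
  obtain ⟨c, hc⟩ := h
  let edgeAt (u : G.neighborSet v) : G.edgeSet := ⟨s(v, u), u.2⟩
  have hinj : Function.Injective (c ∘ edgeAt) := by
    intro u w huw
    by_contra hne
    refine hc _ _ (fun h => hne ?_) ⟨v, Sym2.mem_mk_left _ _, Sym2.mem_mk_left _ _⟩ huw
    exact Subtype.ext (Sym2.congr_right.mp (congrArg Subtype.val h))
  simpa [vdeg, Nat.card_coe_set_eq] using Nat.card_le_card_of_injective _ hinj

lemma chromIndex_eq_of_edgeColorable_vdeg {G : SimpleGraph V} {v : V}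
    (h : EdgeColorable G (vdeg G v)) : chromIndex G = vdeg G v :=
  le_antisymm (Nat.sInf_le h) (le_csInf ⟨_, h⟩ fun _ hn => hn.vdeg_le v)

lemma EdgeColorable.of_sym2 {α : Type*} [Fintype α] {G : SimpleGraph V} (c : Sym2 V → α)
    (hc : ∀ ⦃w a b⦄, G.Adj w a → G.Adj w b → a ≠ b → c s(w, a) ≠ c s(w, b)) :
    EdgeColorable G (Fintype.card α) := by
  refine ⟨fun e => Fintype.equivFin α (c e), ?_⟩
  rintro ⟨e, he⟩ ⟨f, hf⟩ hef ⟨w, hwe, hwf⟩ hcol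
  obtain ⟨a, rfl⟩ := Sym2.mem_iff_exists.mp hwe
  obtain ⟨b, rfl⟩ := Sym2.mem_iff_exists.mp hwf
  exact hc he hf (fun hab => hef (by subst hab; rfl)) ((Fintype.equivFin α).injective hcol)

/-- The circle method of round-robin scheduling on `m + 1` players (`m` odd): in round `r`
the players `a, b : ZMod m` with `a + b = r` meet, and the one player `a` with `2 * a = r`
meets the extra player `none`. -/
def roundRobinColor (m : ℕ) : Option (ZMod m) → Option (ZMod m) → ZMod m
  | none, none => 0
  | none, some b => 2 * b
  | some a, none => 2 * a
  | some a, some b => a + b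

lemma roundRobinColor_comm (m : ℕ) (x y : Option (ZMod m)) :
    roundRobinColor m x y = roundRobinColor m y x := by
  cases x <;> cases y <;> simp [roundRobinColor, add_comm]

lemma roundRobinColor_injOn {m : ℕ} (h2 : IsUnit (2 : ZMod m)) (w : Option (ZMod m)) :
    Set.InjOn (roundRobinColor m w) {w}ᶜ := by
  rintro (_ | a) ha (_ | b) hb hab <;> cases w <;>
    simp_all only [roundRobinColor, Set.mem_compl_singleton_iff, ne_eq, Option.some.injEq,
      reduceCtorEq, not_false_eq_true] <;>
    first | exact h2.mul_left_cancel hab | grind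

lemma edgeColorable_of_even_card [Finite V] [Nonempty V] (G : SimpleGraph V)
    (heven : Even (Nat.card V)) : EdgeColorable G (Nat.card V - 1) := by
  set m := Nat.card V - 1
  have hm : Odd m := by
    have := Nat.card_pos (α := V)
    obtain ⟨k, hk⟩ := heven
    exact ⟨k - 1, by omega⟩
  have : NeZero m := ⟨hm.pos.ne'⟩
  have h2 : IsUnit (2 : ZMod m) := by
    exact_mod_cast (ZMod.isUnit_iff_coprime 2 m).mpr (Nat.coprime_two_left.mpr hm)
  obtain ⟨e⟩ : Nonempty (V ≃ Option (ZMod m)) := by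
    rw [← Finite.card_eq, Finite.card_option, Nat.card_zmod]
    have := Nat.card_pos (α := V)
    omega
  rw [← ZMod.card m]
  refine EdgeColorable.of_sym2
    (Sym2.lift ⟨fun u v => roundRobinColor m (e u) (e v), fun u v => roundRobinColor_comm m _ _⟩)
    fun w a b hwa hwb hab => ?_
  exact (roundRobinColor_injOn h2 (e w)).ne (e.injective.ne (G.ne_of_adj hwa).symm)
    (e.injective.ne (G.ne_of_adj hwb).symm) (e.injective.ne hab)

/-- A graph with an even number of vertices and a universal vertex is Class 1
(`χ'(G) = Δ(G)`). -/
theorem stmt6 [Fintype V] (G : SimpleGraph V) (heven : Even (Nat.card V))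
    (huniv : ∃ v, UniversalVertex G v) :
    chromIndex G = maxDeg G := by
  obtain ⟨v, hv⟩ := huniv
  have : Nonempty V := ⟨v⟩
  rw [hv.maxDeg_eq]
  exact chromIndex_eq_of_edgeColorable_vdeg (hv.vdeg_eq ▸ edgeColorable_of_even_card G heven)
end

section
/- Let G = ((X,Y),E) be a connected split graph with stretch index σ(G) = 2, let P be its set of pendant vertices, and let A = {a ∈ V(G) : deg(a) = Δ(G) and a is universal in G[V ∖ P]}. If every vertex a ∈ A has at least one pendant neighbor, then G is Class 1, i.e., χ'(G) = Δ(G). -/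
open SimpleGraph Set

variable {V : Type*}

lemma exists_adj_of_connected {G : SimpleGraph V} (hc : G.Connected) {u w : V} (hne : w ≠ u) :
    ∃ x, G.Adj u x := by
  obtain ⟨p⟩ := hc.preconnected u w
  cases p with
  | nil => exact absurd rfl hne
  | cons h _ => exact ⟨_, h⟩


lemma no_two_paths {T : SimpleGraph V} (hT : T.IsTree) {u v : V} (p q : T.Walk u v)
    (hp : p.IsPath) (hq : q.IsPath) (hne : p.support ≠ q.support) : False :=
  hne (by rw [(hT.existsUnique_path u v).unique hp hq])

lemma isPath1 {T : SimpleGraph V} {a b : V} (h : T.Adj a b) :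
    (Walk.cons h Walk.nil).IsPath := by
  simp [Walk.isPath_def, h.ne]

lemma isPath2 {T : SimpleGraph V} {a b c : V} (h1 : T.Adj a b) (h2 : T.Adj b c) (hac : a ≠ c) :
    (Walk.cons h1 (Walk.cons h2 Walk.nil)).IsPath := by
  simp [Walk.isPath_def, h1.ne, h2.ne, hac]

lemma isPath3 {T : SimpleGraph V} {a b c d : V} (h1 : T.Adj a b) (h2 : T.Adj b c)
    (h3 : T.Adj c d) (hac : a ≠ c) (had : a ≠ d) (hbd : b ≠ d) :
    (Walk.cons h1 (Walk.cons h2 (Walk.cons h3 Walk.nil))).IsPath := by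
  simp [Walk.isPath_def, h1.ne, h2.ne, h3.ne, hac, had, hbd]

lemma isPath4 {T : SimpleGraph V} {a b c d e : V} (h1 : T.Adj a b) (h2 : T.Adj b c)
    (h3 : T.Adj c d) (h4 : T.Adj d e) (hac : a ≠ c) (had : a ≠ d) (hae : a ≠ e)
    (hbd : b ≠ d) (hbe : b ≠ e) (hce : c ≠ e) :
    (Walk.cons h1 (Walk.cons h2 (Walk.cons h3 (Walk.cons h4 Walk.nil)))).IsPath := by
  simp [Walk.isPath_def, h1.ne, h2.ne, h3.ne, h4.ne, hac, had, hae, hbd, hbe, hce]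

lemma adj_or_mid {T : SimpleGraph V} (hc : T.Connected) {u v : V} (hne : u ≠ v)
    (h2 : T.dist u v ≤ 2) : T.Adj u v ∨ ∃ w, T.Adj u w ∧ T.Adj w v := by
  obtain ⟨p, hp⟩ := hc.exists_walk_length_eq_dist u v
  cases p with
  | nil => exact absurd rfl hne
  | cons h q =>
    cases q with
    | nil => exact Or.inl h
    | cons h' r =>
      have hr : r.length = 0 := by
        simp only [Walk.length_cons] at hp
        omega
      exact Or.inr ⟨_, h, (Walk.eq_of_length_eq_zero hr) ▸ h'⟩

/-- In a tree `2`-spanner of `G`, there is a vertex `c` whose closed `T`-neighborhood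
contains the clique `X`. -/
lemma exists_center [Nonempty V] {G T : SimpleGraph V} {X : Set V} (hT : T.IsTree)
    (hdist : ∀ u v, G.Adj u v → T.dist u v ≤ 2) (hX : G.IsClique X) :
    ∃ c, ∀ x ∈ X, x = c ∨ T.Adj c x := by
  classical
  rcases X.eq_empty_or_nonempty with rfl | ⟨x0, hx0⟩
  · exact ⟨Classical.arbitrary V, fun x hx => absurd hx (Set.notMem_empty x)⟩
  by_cases hall : ∀ x ∈ X, x = x0 ∨ T.Adj x0 x
  · exact ⟨x0, hall⟩
  push_neg at hall
  obtain ⟨x1, hx1, hne01, hnadj01⟩ := hall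
  have hGadj01 : G.Adj x0 x1 := hX hx0 hx1 (Ne.symm hne01)
  rcases adj_or_mid hT.isConnected hGadj01.ne (hdist _ _ hGadj01) with h | ⟨m, hm0, hm1⟩
  · exact absurd h hnadj01
  refine ⟨m, fun x hx => ?_⟩
  by_contra hcon
  push_neg at hcon
  obtain ⟨hxm, hnadjmx⟩ := hcon
  have hnadjxm : ¬ T.Adj m x := hnadjmx
  rcases eq_or_ne x x0 with rfl | hxx0
  · exact hnadjxm hm0.symm
  rcases eq_or_ne x x1 with rfl | hxx1
  · exact hnadjxm hm1
  have hd0 : T.dist x0 x ≤ 2 := hdist _ _ (hX hx0 hx (Ne.symm hxx0))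
  have hd1 : T.dist x1 x ≤ 2 := hdist _ _ (hX hx1 hx (Ne.symm hxx1))
  by_cases a0 : T.Adj x0 x
  · by_cases a1 : T.Adj x1 x
    · -- paths x0 → x1 : [x0,m,x1] vs [x0,x,x1]
      exact no_two_paths hT (Walk.cons hm0 (Walk.cons hm1 Walk.nil))
        (Walk.cons a0 (Walk.cons a1.symm Walk.nil))
        (isPath2 hm0 hm1 (Ne.symm hne01)) (isPath2 a0 a1.symm (Ne.symm hne01))
        (by simp [Ne.symm hxm])
    · rcases adj_or_mid hT.isConnected (hX hx1 hx (Ne.symm hxx1)).ne hd1 with h | ⟨w, hw1, hwx⟩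
      · exact a1 h
      have hwm : w ≠ m := fun h => hnadjmx (h ▸ hwx)
      rcases eq_or_ne w x0 with rfl | hwx0
      · exact hnadj01 hw1.symm
      · -- paths x0 → x1 : [x0,m,x1] vs [x0,x,w,x1]
        exact no_two_paths hT (Walk.cons hm0 (Walk.cons hm1 Walk.nil))
          (Walk.cons a0 (Walk.cons hwx.symm (Walk.cons hw1.symm Walk.nil)))
          (isPath2 hm0 hm1 (Ne.symm hne01))
          (isPath3 a0 hwx.symm hw1.symm (Ne.symm hwx0) (Ne.symm hne01) hxx1)
          (by simp)
  · rcases adj_or_mid hT.isConnected (hX hx0 hx (Ne.symm hxx0)).ne hd0 with h | ⟨u, hu0, hux⟩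
    · exact a0 h
    have hum : u ≠ m := fun h => hnadjmx (h ▸ hux)
    have hux1 : u ≠ x1 := fun h => hnadj01 (h ▸ hu0)
    by_cases a1 : T.Adj x1 x
    · -- paths x0 → x1 : [x0,m,x1] vs [x0,u,x,x1]
      exact no_two_paths hT (Walk.cons hm0 (Walk.cons hm1 Walk.nil))
        (Walk.cons hu0 (Walk.cons hux (Walk.cons a1.symm Walk.nil)))
        (isPath2 hm0 hm1 (Ne.symm hne01))
        (isPath3 hu0 hux a1.symm (Ne.symm hxx0) (Ne.symm hne01) hux1)
        (by simp)
    · rcases adj_or_mid hT.isConnected (hX hx1 hx (Ne.symm hxx1)).ne hd1 with h | ⟨w, hw1, hwx⟩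
      · exact a1 h
      have hwm : w ≠ m := fun h => hnadjmx (h ▸ hwx)
      have hwx0 : w ≠ x0 := fun h => a0 (h ▸ hwx)
      rcases eq_or_ne u w with rfl | huw
      · -- paths x0 → x1 : [x0,m,x1] vs [x0,u,x1]
        exact no_two_paths hT (Walk.cons hm0 (Walk.cons hm1 Walk.nil))
          (Walk.cons hu0 (Walk.cons hw1.symm Walk.nil))
          (isPath2 hm0 hm1 (Ne.symm hne01)) (isPath2 hu0 hw1.symm (Ne.symm hne01))
          (by simp [Ne.symm hum])
      · -- paths x0 → x1 : [x0,m,x1] vs [x0,u,x,w,x1]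
        exact no_two_paths hT (Walk.cons hm0 (Walk.cons hm1 Walk.nil))
          (Walk.cons hu0 (Walk.cons hux (Walk.cons hwx.symm (Walk.cons hw1.symm Walk.nil))))
          (isPath2 hm0 hm1 (Ne.symm hne01))
          (isPath4 hu0 hux hwx.symm hw1.symm (Ne.symm hxx0) (Ne.symm hwx0) (Ne.symm hne01) huw hux1 hxx1)
          (by simp)


/-- The center is adjacent in `G` to every non-pendant vertex. -/
lemma center_universal [Fintype V] {G T : SimpleGraph V} {X Y : Set V} {c : V}
    (hT : T.IsTree) (hTG : T ≤ G) (hdist : ∀ u v, G.Adj u v → T.dist u v ≤ 2)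
    (hXY : X ∪ Y = Set.univ) (hindep : ∀ u ∈ Y, ∀ v ∈ Y, ¬ G.Adj u v)
    (hc : ∀ x ∈ X, x = c ∨ T.Adj c x)
    (hnbr : ∀ v : V, ∃ x, G.Adj v x) :
    ∀ v : V, (G.neighborSet v).ncard ≠ 1 → v ≠ c → G.Adj c v := by
  intro v hv hvc
  by_cases hvX : v ∈ X
  · rcases hc v hvX with rfl | h
    · exact absurd rfl hvc
    · exact hTG h
  have hvY : v ∈ Y := by
    have : v ∈ X ∪ Y := hXY ▸ Set.mem_univ v
    exact this.resolve_left hvX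
  have hNX : ∀ u, G.Adj v u → u ∈ X := by
    intro u hu
    have : u ∈ X ∪ Y := hXY ▸ Set.mem_univ u
    rcases this with h | h
    · exact h
    · exact absurd hu (hindep v hvY u h)
  by_contra hncv
  -- v has at least two G-neighbors
  have h2n : 1 < (G.neighborSet v).ncard := by
    obtain ⟨x, hx⟩ := hnbr v
    have hpos : 0 < (G.neighborSet v).ncard :=
      (Set.ncard_pos (Set.toFinite _)).mpr ⟨x, hx⟩
    omega
  obtain ⟨xa, hxa, xb, hxb, hab⟩ := (Set.one_lt_ncard (Set.toFinite _)).mp h2n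
  have hxa' : G.Adj v xa := hxa
  have hxb' : G.Adj v xb := hxb
  -- neighbors of v are in X and not c, and T-adjacent to c
  have hprop : ∀ u, G.Adj v u → u ≠ c ∧ T.Adj c u := by
    intro u hu
    have huc : u ≠ c := by rintro rfl; exact hncv hu.symm
    rcases hc u (hNX u hu) with h | h
    · exact absurd h huc
    · exact ⟨huc, h⟩
  obtain ⟨hxac, hTca⟩ := hprop xa hxa'
  obtain ⟨hxbc, hTcb⟩ := hprop xb hxb'
  have hnTvc : ¬ T.Adj v c := fun h => hncv (hTG h.symm)
  -- a middle vertex for a non-T-adjacent G-neighbor gives a contradiction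
  have hmid : ∀ u, G.Adj v u → ¬ T.Adj v u → ∃ w, T.Adj v w ∧ T.Adj w u ∧ w ≠ c ∧ T.Adj c w := by
    intro u hu hnadj
    rcases adj_or_mid hT.isConnected hu.ne (hdist _ _ hu) with h | ⟨w, hw1, hw2⟩
    · exact absurd h hnadj
    have hwc : w ≠ c := by rintro rfl; exact hnTvc hw1
    obtain ⟨-, hTcw⟩ := hprop w (hTG hw1)
    exact ⟨w, hw1, hw2, hwc, hTcw⟩
  by_cases ta : T.Adj v xa
  · by_cases tb : T.Adj v xb
    · -- paths xa → xb : [xa,v,xb] vs [xa,c,xb]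
      exact no_two_paths hT (Walk.cons ta.symm (Walk.cons tb Walk.nil))
        (Walk.cons hTca.symm (Walk.cons hTcb Walk.nil))
        (isPath2 ta.symm tb hab) (isPath2 hTca.symm hTcb hab)
        (by simp [fun h => hvc h])
    · obtain ⟨w, hw1, hw2, hwc, hTcw⟩ := hmid xb hxb' tb
      rcases eq_or_ne w xa with rfl | hwa
      · -- paths w → xb : [w,xb] vs [w,c,xb]
        exact no_two_paths hT (Walk.cons hw2 Walk.nil)
          (Walk.cons hTcw.symm (Walk.cons hTcb Walk.nil))
          (isPath1 hw2) (isPath2 hTcw.symm hTcb hw2.ne)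
          (by simp)
      · -- paths xa → w : [xa,v,w] vs [xa,c,w]
        exact no_two_paths hT (Walk.cons ta.symm (Walk.cons hw1 Walk.nil))
          (Walk.cons hTca.symm (Walk.cons hTcw Walk.nil))
          (isPath2 ta.symm hw1 (Ne.symm hwa)) (isPath2 hTca.symm hTcw (Ne.symm hwa))
          (by simp [fun h => hvc h])
  · obtain ⟨w, hw1, hw2, hwc, hTcw⟩ := hmid xa hxa' ta
    -- paths w → xa : [w,xa] vs [w,c,xa]
    exact no_two_paths hT (Walk.cons hw2 Walk.nil)
      (Walk.cons hTcw.symm (Walk.cons hTca Walk.nil))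
      (isPath1 hw2) (isPath2 hTcw.symm hTca hw2.ne)
      (by simp)



lemma no_adj_pendants [Fintype V] {G : SimpleGraph V} (hc : G.Connected)
    (h3 : 3 ≤ Fintype.card V) {p q : V} (hp : vdeg G p = 1) (hq : vdeg G q = 1)
    (hpq : G.Adj p q) : False := by
  classical
  have hsingle : ∀ {a b : V}, vdeg G a = 1 → G.Adj a b → G.neighborSet a = {b} := by
    intro a b ha hab
    obtain ⟨x, hx⟩ := Set.ncard_eq_one.mp ha
    have hb : b ∈ G.neighborSet a := hab
    rw [hx] at hb ⊢
    rw [Set.mem_singleton_iff] at hb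
    rw [hb]
  have hNp := hsingle hp hpq
  have hNq := hsingle hq hpq.symm
  have key : ∀ (a r : V) (w : G.Walk a r), a ∈ ({p, q} : Set V) → r ∈ ({p, q} : Set V) := by
    intro a r w
    induction w with
    | nil => exact id
    | @cons a b r h w ih =>
      intro ha
      apply ih
      rcases ha with rfl | ha
      · have : b ∈ G.neighborSet a := h
        rw [hNp] at this
        exact Or.inr this
      · rw [Set.mem_singleton_iff] at ha; subst ha
        have : b ∈ G.neighborSet a := h
        rw [hNq] at this
        exact Or.inl this
  have : ∃ r : V, r ∉ ({p, q} : Set V) := by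
    by_contra hcon
    push_neg at hcon
    have hsub : (Finset.univ : Finset V) ⊆ {p, q} := by
      intro r _
      have := hcon r
      simpa using this
    have h1 := Finset.card_le_card hsub
    have h2 : ({p, q} : Finset V).card ≤ 2 :=
      le_trans (Finset.card_insert_le _ _) (by simp)
    rw [Finset.card_univ] at h1
    omega
  obtain ⟨r, hr⟩ := this
  obtain ⟨w⟩ := hc.preconnected p r
  exact hr (key p r w (Or.inl rfl))

lemma lb_lemma [Fintype V] {G : SimpleGraph V} {k : ℕ}
    (h : ∃ c : G.edgeSet → Fin k, ∀ e f : G.edgeSet,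
      e ≠ f → (∃ v, v ∈ (e : Sym2 V) ∧ v ∈ (f : Sym2 V)) → c e ≠ c f) (v : V) :
    vdeg G v ≤ k := by
  classical
  obtain ⟨col, hcol⟩ := h
  let φ : G.neighborSet v → Fin k := fun u => col ⟨s(v, u.1), G.mem_edgeSet.mpr u.2⟩
  have hφ : Function.Injective φ := by
    intro a b hab
    by_contra hne
    have hne' : a.1 ≠ b.1 := fun h => hne (Subtype.ext h)
    refine hcol _ _ ?_ ⟨v, ?_, ?_⟩ hab
    · intro h
      exact hne' (Sym2.congr_right.mp (congrArg Subtype.val h))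
    · simp
    · simp
  have := Fintype.card_le_of_injective φ hφ
  rw [Fintype.card_fin] at this
  calc vdeg G v = Nat.card (G.neighborSet v) := (Nat.card_coe_set_eq _).symm
    _ = Fintype.card (G.neighborSet v) := Nat.card_eq_fintype_card
    _ ≤ k := this



lemma color_lemma [Fintype V] {G : SimpleGraph V} {n : ℕ}
    (hdeg : ∀ v, vdeg G v ≤ n)
    (hS1 : 1 ≤ ({v | vdeg G v ≠ 1} : Set V).ncard)
    (hSn : ({v | vdeg G v ≠ 1} : Set V).ncard ≤ n)
    (hpp : ∀ p q : V, vdeg G p = 1 → G.Adj p q → vdeg G q ≠ 1) :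
    ∃ c : G.edgeSet → Fin n, ∀ e f : G.edgeSet,
      e ≠ f → (∃ v, v ∈ (e : Sym2 V) ∧ v ∈ (f : Sym2 V)) → c e ≠ c f := by
  classical
  set S : Set V := {v | vdeg G v ≠ 1} with hSdef
  set m := S.ncard with hm
  have hn1 : 1 ≤ n := le_trans hS1 hSn
  have hfin : S.Finite := Set.toFinite S
  -- labeling of non-pendant vertices
  obtain ⟨ℓ, hℓlt, hℓinj⟩ : ∃ ℓ : V → ℕ, (∀ v ∈ S, ℓ v < m) ∧ Set.InjOn ℓ S := by
    haveI : Fintype S := hfin.fintype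
    have hcard : Fintype.card S = m := by
      rw [hm, ← Nat.card_coe_set_eq, Nat.card_eq_fintype_card]
    let e := Fintype.equivFinOfCardEq hcard
    refine ⟨fun v => if h : v ∈ S then (e ⟨v, h⟩ : Fin m).val else 0, ?_, ?_⟩
    · intro v hv
      simp only [dif_pos hv]
      exact (e ⟨v, hv⟩).isLt
    · intro a ha b hb hab
      simp only [dif_pos ha, dif_pos hb] at hab
      have := e.injective (Fin.ext hab)
      exact congrArg Subtype.val this
  have hm0 : 0 < m := hS1
  let hcF : V → V → Fin n := fun u v => ⟨(ℓ u + ℓ v) % m, lt_of_lt_of_le (Nat.mod_lt _ hm0) hSn⟩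
  have hcF_symm : ∀ u v, hcF u v = hcF v u := by
    intro u v; simp only [hcF, Nat.add_comm]
  have hcF_inj : ∀ a ∈ S, ∀ b ∈ S, ∀ c ∈ S, b ≠ c → hcF a b ≠ hcF a c := by
    intro a _ b hb c hc hbc heq
    apply hbc
    apply hℓinj hb hc
    have hval : (ℓ a + ℓ b) % m = (ℓ a + ℓ c) % m := congrArg Fin.val heq
    have h1 : ℓ b ≡ ℓ c [MOD m] := Nat.ModEq.add_left_cancel' (ℓ a) hval
    have := h1
    unfold Nat.ModEq at this
    rwa [Nat.mod_eq_of_lt (hℓlt b hb), Nat.mod_eq_of_lt (hℓlt c hc)] at this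
  -- the unique neighbor of a pendant
  have hpn : ∀ p : V, vdeg G p = 1 → ∃ q, G.neighborSet p = {q} := fun p hp =>
    Set.ncard_eq_one.mp hp
  -- used colors and free colors at each vertex
  let used : V → Finset (Fin n) := fun q =>
    Finset.image (fun v => hcF q v) (Finset.univ.filter (fun v => v ∈ S ∧ G.Adj q v))
  let free : V → Finset (Fin n) := fun q => Finset.univ \ used q
  let Pq : V → Finset V := fun q => Finset.univ.filter (fun p => vdeg G p = 1 ∧ G.Adj q p)
  have hvdeg_card : ∀ q : V, vdeg G q = (G.neighborFinset q).card := by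
    intro q
    rw [vdeg, SimpleGraph.neighborFinset_def, Set.ncard_eq_toFinset_card']
  have hcardPF : ∀ q, (Pq q).card ≤ (free q).card := by
    intro q
    have h1 : (used q).card ≤ (Finset.univ.filter (fun v => v ∈ S ∧ G.Adj q v)).card :=
      Finset.card_image_le
    have hsub : (Finset.univ.filter (fun v => v ∈ S ∧ G.Adj q v)) ∪ Pq q ⊆
        G.neighborFinset q := by
      intro x hx
      rw [SimpleGraph.mem_neighborFinset]
      rcases Finset.mem_union.mp hx with h | h
      · exact (Finset.mem_filter.mp h).2.2
      · exact (Finset.mem_filter.mp h).2.2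
    have hdisj : Disjoint (Finset.univ.filter (fun v => v ∈ S ∧ G.Adj q v)) (Pq q) := by
      rw [Finset.disjoint_left]
      intro x hx hx'
      exact (Finset.mem_filter.mp hx).2.1 (Finset.mem_filter.mp hx').2.1
    have hcardu := Finset.card_le_card hsub
    rw [Finset.card_union_of_disjoint hdisj] at hcardu
    have hdq : (G.neighborFinset q).card ≤ n := by rw [← hvdeg_card]; exact hdeg q
    have hfreec : (free q).card = n - (used q).card := by
      rw [Finset.card_sdiff_of_subset (Finset.subset_univ _), Finset.card_univ, Fintype.card_fin]
    omega
  have hinj : ∀ q : V, ∃ g : V → Fin n,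
      Set.InjOn g (Pq q) ∧ ∀ p ∈ Pq q, g p ∈ free q := by
    intro q
    have hcard : Fintype.card (Pq q) ≤ Fintype.card (free q) := by
      simpa [Fintype.card_coe] using hcardPF q
    obtain ⟨emb⟩ := Function.Embedding.nonempty_of_card_le hcard
    refine ⟨fun p => if h : p ∈ Pq q then (emb ⟨p, h⟩ : {x // x ∈ free q}).val else ⟨0, hn1⟩,
      ?_, ?_⟩
    · intro a ha b hb hab
      rw [Finset.mem_coe] at ha hb
      simp only [dif_pos ha, dif_pos hb] at hab
      have := emb.injective (Subtype.ext hab)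
      exact congrArg Subtype.val this
    · intro p hp
      simp only [dif_pos hp]
      exact (emb ⟨p, hp⟩).2
  choose g hginj hgfree using hinj
  -- total symmetric color function
  let fcol : V → V → Fin n := fun u v =>
    if vdeg G u = 1 then (if vdeg G v = 1 then ⟨0, hn1⟩ else g v u)
    else if vdeg G v = 1 then g u v else hcF u v
  have fcol_symm : ∀ u v, fcol u v = fcol v u := by
    intro u v
    by_cases h1 : vdeg G u = 1 <;> by_cases h2 : vdeg G v = 1 <;>
      simp [fcol, h1, h2, hcF_symm]
  let col : Sym2 V → Fin n := Sym2.lift ⟨fcol, fcol_symm⟩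
  have key : ∀ a b1 b2 : V, G.Adj a b1 → G.Adj a b2 → b1 ≠ b2 →
      fcol a b1 ≠ fcol a b2 := by
    intro a b1 b2 h1 h2 hne
    by_cases ha : vdeg G a = 1
    · exfalso
      apply hne
      obtain ⟨q, hq⟩ := hpn a ha
      have e1 : b1 ∈ G.neighborSet a := h1
      have e2 : b2 ∈ G.neighborSet a := h2
      rw [hq, Set.mem_singleton_iff] at e1 e2
      rw [e1, e2]
    · have haS : a ∈ S := ha
      have hmem : ∀ b : V, vdeg G b = 1 → G.Adj a b → b ∈ Pq a := by
        intro b hb hab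
        simp only [Pq, Finset.mem_filter, Finset.mem_univ, true_and]
        exact ⟨hb, hab⟩
      have husedmem : ∀ b : V, vdeg G b ≠ 1 → G.Adj a b → hcF a b ∈ used a := by
        intro b hb hab
        apply Finset.mem_image_of_mem
        simp only [Finset.mem_filter, Finset.mem_univ, true_and]
        exact ⟨hb, hab⟩
      by_cases hb1 : vdeg G b1 = 1 <;> by_cases hb2 : vdeg G b2 = 1
      · simp only [fcol, if_neg ha, if_pos hb1, if_pos hb2]
        intro h
        exact hne (hginj a (hmem b1 hb1 h1) (hmem b2 hb2 h2) h)
      · simp only [fcol, if_neg ha, if_pos hb1, if_neg hb2]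
        intro h
        have hf := hgfree a b1 (hmem b1 hb1 h1)
        rw [h] at hf
        rw [Finset.mem_sdiff] at hf
        exact hf.2 (husedmem b2 hb2 h2)
      · simp only [fcol, if_neg ha, if_neg hb1, if_pos hb2]
        intro h
        have hf := hgfree a b2 (hmem b2 hb2 h2)
        rw [← h] at hf
        rw [Finset.mem_sdiff] at hf
        exact hf.2 (husedmem b1 hb1 h1)
      · simp only [fcol, if_neg ha, if_neg hb1, if_neg hb2]
        exact hcF_inj a haS b1 hb1 b2 hb2 hne
  refine ⟨fun e => col e.1, ?_⟩
  rintro ⟨e, he⟩ ⟨f, hf⟩ hef ⟨v, hve, hvf⟩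
  simp only [Subtype.coe_mk] at hve hvf
  obtain ⟨b1, rfl⟩ := Sym2.mem_iff_exists.mp hve
  obtain ⟨b2, rfl⟩ := Sym2.mem_iff_exists.mp hvf
  have h1 : G.Adj v b1 := G.mem_edgeSet.mp he
  have h2 : G.Adj v b2 := G.mem_edgeSet.mp hf
  have hb : b1 ≠ b2 := by
    rintro rfl
    exact hef rfl
  simpa [col, Sym2.lift_mk] using key v b1 b2 h1 h2 hb



/-- Let `G` be a connected `(σ = 2)`-split graph and `A` the set of vertices of maximum
degree that are universal in `G[V ∖ P]` (where `P` is the set of pendant vertices).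
If every vertex of `A` has a pendant neighbor, then `G` is Class 1 (`χ'(G) = Δ(G)`). -/
theorem stmt13 [Fintype V] (G : SimpleGraph V) (X Y : Set V)
    (hsplit : IsSplitPartition G X Y) (hmax : IsMaximalClique G X)
    (hconn : G.Connected) (hsigma : stretchIndex G = 2)
    (hA : ∀ a, vdeg G a = maxDeg G → UniversalIn G (pendants G)ᶜ a →
      ∃ u, G.Adj a u ∧ vdeg G u = 1) :
    chromIndex G = maxDeg G := by
  classical
  obtain ⟨hXY, hdisj, hclique, hindep⟩ := hsplit
  haveI : Nonempty V := hconn.nonempty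
  have hStne : {t | 1 ≤ t ∧ ∃ T, IsTreeSpanner G T t}.Nonempty := by
    by_contra h
    rw [Set.not_nonempty_iff_eq_empty] at h
    rw [stretchIndex, h, Nat.sInf_empty] at hsigma
    exact absurd hsigma (by norm_num)
  have hmem2 := Nat.sInf_mem hStne
  rw [show sInf {t | 1 ≤ t ∧ ∃ T, IsTreeSpanner G T t} = stretchIndex G from rfl,
    hsigma] at hmem2
  obtain ⟨-, T, hTG, hTtree, hTdist⟩ := hmem2
  have hn1 : (1 : ℕ) ∉ {t | 1 ≤ t ∧ ∃ T, IsTreeSpanner G T t} := by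
    intro h
    have := Nat.sInf_le h
    rw [show sInf {t | 1 ≤ t ∧ ∃ T, IsTreeSpanner G T t} = stretchIndex G from rfl,
      hsigma] at this
    omega
  have h3 : 3 ≤ Fintype.card V := by
    by_contra hlt
    push_neg at hlt
    apply hn1
    refine ⟨le_refl 1, T, hTG, hTtree, ?_⟩
    intro u v huv
    have hTadj : T.Adj u v := by
      obtain ⟨p⟩ := hTtree.isConnected.preconnected u v
      cases p with
      | nil => exact absurd rfl huv.ne
      | @cons _ x _ h q =>
        rcases eq_or_ne x v with rfl | hxv
        · exact h
        · exfalso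
          have hcard : ({u, x, v} : Finset V).card = 3 := by
            rw [Finset.card_insert_of_notMem (by simp [h.ne, huv.ne]),
              Finset.card_insert_of_notMem (by simp [hxv]), Finset.card_singleton]
          have := Finset.card_le_univ ({u, x, v} : Finset V)
          rw [hcard] at this
          omega
    calc T.dist u v ≤ (Walk.cons hTadj Walk.nil).length := SimpleGraph.dist_le _
      _ = 1 := rfl
  have hnbr : ∀ v : V, ∃ x, G.Adj v x := by
    intro v
    obtain ⟨w, hw⟩ := Fintype.exists_ne_of_one_lt_card (by omega) v
    exact exists_adj_of_connected hconn hw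
  obtain ⟨c, hc⟩ := exists_center (G := G) hTtree hTdist hclique
  have hUC := center_universal hTtree hTG hTdist hXY hindep hc hnbr
  have hSeq : (pendants G)ᶜ = {v | vdeg G v ≠ 1} := by
    ext v
    simp [pendants, vdeg]
  set S : Set V := {v | vdeg G v ≠ 1} with hS
  have hSfin : S.Finite := Set.toFinite S
  have hdeg : ∀ v, vdeg G v ≤ maxDeg G := fun v =>
    le_csSup (Set.Finite.bddAbove (Set.finite_range _)) ⟨v, rfl⟩
  have hdeg1 : ∀ v, 1 ≤ vdeg G v := by
    intro v
    obtain ⟨x, hx⟩ := hnbr v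
    exact (Set.ncard_pos (Set.toFinite _)).mpr ⟨x, hx⟩
  have hΔ1 : 1 ≤ maxDeg G := le_trans (hdeg1 (Classical.arbitrary V)) (hdeg _)
  have hUC' : ∀ v : V, vdeg G v ≠ 1 → v ≠ c → G.Adj c v := fun v hv => hUC v hv
  have hSne : S.Nonempty := by
    obtain ⟨v⟩ := (inferInstance : Nonempty V)
    by_cases h : vdeg G v = 1
    · obtain ⟨x, hx⟩ := hnbr v
      refine ⟨x, fun h1 => ?_⟩
      exact no_adj_pendants hconn h3 h h1 hx
    · exact ⟨v, h⟩
  have hS1 : 1 ≤ S.ncard := (Set.ncard_pos hSfin).mpr hSne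
  have hSn : S.ncard ≤ maxDeg G := by
    rcases le_or_gt S.ncard 1 with h | h
    · exact le_trans h hΔ1
    · have hcS : c ∈ S := by
        by_contra hcP
        have hc1 : vdeg G c = 1 := by simpa [hS] using hcP
        obtain ⟨s1, hs1, s2, hs2, hss⟩ := (Set.one_lt_ncard hSfin).mp h
        have ha1 : G.Adj c s1 := hUC' s1 hs1 (by rintro rfl; exact hcP hs1)
        have ha2 : G.Adj c s2 := hUC' s2 hs2 (by rintro rfl; exact hcP hs2)
        have hsub : ({s1, s2} : Set V) ⊆ G.neighborSet c := by
          rintro z (rfl | hz)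
          · exact ha1
          · rw [Set.mem_singleton_iff] at hz
            subst hz
            exact ha2
        have hle := Set.ncard_le_ncard hsub (Set.toFinite _)
        rw [Set.ncard_pair hss] at hle
        have hc1' : (G.neighborSet c).ncard = 1 := hc1
        omega
      by_contra hlt
      push_neg at hlt
      have hsub1 : S \ {c} ⊆ G.neighborSet c := by
        rintro s ⟨hsS, hsc⟩
        exact hUC' s hsS (by simpa using hsc)
      have hd1' : S.ncard - 1 ≤ vdeg G c := by
        have hle := Set.ncard_le_ncard hsub1 (Set.toFinite _)
        rw [Set.ncard_diff_singleton_of_mem hcS] at hle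
        exact hle
      have hceq : vdeg G c = maxDeg G := le_antisymm (hdeg c) (by omega)
      have huniv : UniversalIn G (pendants G)ᶜ c := by
        refine ⟨?_, ?_⟩
        · rw [hSeq]; exact hcS
        · intro u hu hune
          rw [hSeq] at hu
          exact hUC' u hu hune
      obtain ⟨u, hcu, hu1⟩ := hA c hceq huniv
      have huS : u ∉ S := by simp [hS, hu1]
      have hsub2 : insert u (S \ {c}) ⊆ G.neighborSet c := by
        rintro z (rfl | hz)
        · exact hcu
        · exact hsub1 hz
      have hcard2 := Set.ncard_le_ncard hsub2 (Set.toFinite _)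
      rw [Set.ncard_insert_of_notMem (fun hh : u ∈ S \ {c} => huS hh.1),
        Set.ncard_diff_singleton_of_mem hcS] at hcard2
      have hcard2' : S.ncard - 1 + 1 ≤ vdeg G c := hcard2
      omega
  have hEC : EdgeColorable G (maxDeg G) := color_lemma hdeg hS1 hSn
    (fun p q hp hadj h1 => no_adj_pendants hconn h3 hp h1 hadj)
  have hLB : ∀ k ∈ {n | EdgeColorable G n}, maxDeg G ≤ k := by
    intro k hk
    have hrange : maxDeg G ∈ Set.range (fun v => vdeg G v) :=
      Nat.sSup_mem (Set.range_nonempty _) (Set.Finite.bddAbove (Set.finite_range _))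
    obtain ⟨v, hv⟩ := hrange
    rw [← hv]
    exact lb_lemma hk v
  rw [chromIndex]
  exact le_antisymm (Nat.sInf_le hEC) (le_csInf ⟨_, hEC⟩ hLB)
end

section
/- Every connected split graph is 3-admissible: if G is a connected split graph, then G admits a spanning tree T such that for every edge uv of G, the distance between u and v in T is at most 3; equivalently, σ(G) ≤ 3. -/
open SimpleGraph Set

variable {V : Type*}

section Aux

open SimpleGraph

private lemma aux_acyclic {V : Type*} (f : V → V) (L : V → ℕ) (x : V)
    (hdec : ∀ v, v ≠ x → L (f v) < L v) :
    (SimpleGraph.fromRel (fun u v => u ≠ x ∧ f u = v)).IsAcyclic := by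
  classical
  set T := SimpleGraph.fromRel (fun u v => u ≠ x ∧ f u = v) with hT
  have key : ∀ a b : V, T.Adj a b → L b ≤ L a → a ≠ x ∧ f a = b := by
    intro a b hab hle
    rw [hT, SimpleGraph.fromRel_adj] at hab
    obtain ⟨hne, h | h⟩ := hab
    · exact h
    · have := hdec b h.1
      rw [h.2] at this
      omega
  have main : ∀ (m : V) (c : T.Walk m m), c.IsCycle →
      (∀ a ∈ c.support, L a ≤ L m) → False := by
    intro m c hc hsup
    cases c with
    | nil => exact hc.not_of_nil
    | cons h p =>
      rename_i b
      have hb : L b ≤ L m := hsup b (by simp [SimpleGraph.Walk.support_cons,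
        SimpleGraph.Walk.start_mem_support])
      obtain ⟨hmx, hfm⟩ := key m b h hb
      -- decompose the reverse of p to get the last edge into m
      have hmb : m ≠ b := h.ne
      obtain ⟨a, h2, q, hq⟩ := SimpleGraph.Walk.exists_eq_cons_of_ne hmb p.reverse
      have hamem : a ∈ p.support := by
        have : a ∈ p.reverse.support := by
          rw [hq]; simp [SimpleGraph.Walk.support_cons]
        rwa [SimpleGraph.Walk.support_reverse, List.mem_reverse] at this
      have ha : L a ≤ L m := hsup a (by
        simp [SimpleGraph.Walk.support_cons, hamem])
      obtain ⟨_, hfa⟩ := key m a h2 ha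
      have hab : a = b := by rw [← hfa, ← hfm]
      have hedge : s(m, a) ∈ p.reverse.edges := by
        rw [hq]; simp [SimpleGraph.Walk.edges_cons]
      rw [SimpleGraph.Walk.edges_reverse, List.mem_reverse] at hedge
      have hnodup := hc.edges_nodup
      rw [SimpleGraph.Walk.edges_cons] at hnodup
      have : s(m, b) ∉ p.edges := (List.nodup_cons.mp hnodup).1
      exact this (hab ▸ hedge)
  intro v c hc
  obtain ⟨m, hm, hmax⟩ : ∃ m ∈ c.support.toFinset, ∀ a ∈ c.support.toFinset, L a ≤ L m :=
    c.support.toFinset.exists_max_image L ⟨v, List.mem_toFinset.mpr c.start_mem_support⟩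
  rw [List.mem_toFinset] at hm
  refine main m (c.rotate m hm) (hc.rotate hm) ?_
  intro a haa
  rw [(c.rotate m hm).support_eq_cons] at haa
  rcases List.mem_cons.mp haa with haa | haa
  · exact haa ▸ le_refl _
  · have := (SimpleGraph.Walk.support_rotate c m hm).mem_iff.mp haa
    have : a ∈ c.support := by
      rw [c.support_eq_cons]; exact List.mem_cons_of_mem _ this
    exact hmax a (List.mem_toFinset.mpr this)

end Aux

/-- Every connected split graph is 3-admissible: it admits a tree 3-spanner; in
particular `σ(G) ≤ 3`. -/
theorem stmt17 [Fintype V] (G : SimpleGraph V) (hsplit : IsSplitGraph G)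
    (hconn : G.Connected) :
    (∃ T, IsTreeSpanner G T 3) ∧ stretchIndex G ≤ 3 := by
  classical
  have main : ∃ T, IsTreeSpanner G T 3 := by
    by_cases hsub : ∀ a b : V, a = b
    · haveI := hconn.nonempty
      exact ⟨⊥, bot_le, ⟨⟨fun u v => (hsub u v) ▸ Reachable.refl u⟩,
        isAcyclic_bot⟩, fun u v huv => absurd (hsub u v) huv.ne⟩
    · push_neg at hsub
      obtain ⟨a, b, hab⟩ := hsub
      obtain ⟨X, Y, hXY, hdisj, hclique, hindep⟩ := hsplit
      -- every vertex has a neighbor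
      have hnbr : ∀ v : V, ∃ w, G.Adj v w := by
        intro v
        have : ∃ u, u ≠ v := by
          rcases eq_or_ne v a with rfl | hva
          · exact ⟨b, hab.symm⟩
          · exact ⟨a, hva.symm⟩
        obtain ⟨u, hu⟩ := this
        obtain ⟨p⟩ := hconn.preconnected v u
        obtain ⟨w, hw, _, _⟩ := Walk.exists_eq_cons_of_ne (Ne.symm hu) p
        exact ⟨w, hw⟩
      have hmemXY : ∀ v : V, v ∈ X ∨ v ∈ Y := by
        intro v
        have : v ∈ X ∪ Y := hXY ▸ Set.mem_univ v
        exact this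
      -- every vertex not in X has a neighbor in X
      have hnbrX : ∀ v : V, v ∉ X → ∃ w, w ∈ X ∧ G.Adj v w := by
        intro v hv
        have hvY : v ∈ Y := (hmemXY v).resolve_left hv
        obtain ⟨w, hw⟩ := hnbr v
        rcases hmemXY w with hwX | hwY
        · exact ⟨w, hwX, hw⟩
        · exact absurd hw (hindep v hvY w hwY)
      -- X is nonempty
      obtain ⟨x, hxX⟩ : ∃ x, x ∈ X := by
        rcases hmemXY a with h | h
        · exact ⟨a, h⟩
        · obtain ⟨w, hwX, _⟩ := hnbrX a (fun hc => (hdisj.ne_of_mem hc h) rfl)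
          exact ⟨w, hwX⟩
      -- the parent function
      set f : V → V := fun v => if h : v ∈ X then x else (hnbrX v h).choose with hfdef
      have hfX : ∀ v ∈ X, f v = x := fun v hv => by simp [hfdef, hv]
      have hfY : ∀ v, v ∉ X → f v ∈ X ∧ G.Adj v (f v) := by
        intro v hv
        have h1 := (hnbrX v hv).choose_spec
        simpa [hfdef, hv] using h1
      have hfmem : ∀ v, f v ∈ X := by
        intro v
        by_cases hv : v ∈ X
        · rw [hfX v hv]; exact hxX
        · exact (hfY v hv).1
      have hfadj : ∀ v, v ≠ x → G.Adj v (f v) := by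
        intro v hv
        by_cases hvX : v ∈ X
        · rw [hfX v hvX]; exact hclique hvX hxX hv
        · exact (hfY v hvX).2
      -- level function
      set L : V → ℕ := fun v => if v = x then 0 else if v ∈ X then 1 else 2 with hLdef
      have hdec : ∀ v, v ≠ x → L (f v) < L v := by
        intro v hv
        by_cases hvX : v ∈ X
        · simp [hLdef, hv, hvX, hfX v hvX]
        · have hfvX := hfmem v
          have hvx : v ≠ x := hv
          by_cases hfx : f v = x <;> simp [hLdef, hvx, hvX, hfx, hfvX]
      set T : SimpleGraph V := SimpleGraph.fromRel (fun u v => u ≠ x ∧ f u = v) with hTdef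
      have hTadj : ∀ v, v ≠ x → T.Adj v (f v) := by
        intro v hv
        rw [hTdef, SimpleGraph.fromRel_adj]
        exact ⟨(hfadj v hv).ne, Or.inl ⟨hv, rfl⟩⟩
      have hle : T ≤ G := by
        intro u v huv
        rw [hTdef, SimpleGraph.fromRel_adj] at huv
        obtain ⟨hne, h | h⟩ := huv
        · exact h.2 ▸ hfadj u h.1
        · exact (h.2 ▸ hfadj v h.1).symm
      -- reachability to x
      have hreach : ∀ v, T.Reachable v x := by
        intro v
        by_cases hv : v = x
        · exact hv ▸ Reachable.refl v
        · have h1 : T.Reachable v (f v) := (hTadj v hv).reachable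
          by_cases hfv : f v = x
          · exact hfv ▸ h1
          · have h2 : T.Adj (f v) (f (f v)) := hTadj (f v) hfv
            have h3 : f (f v) = x := hfX (f v) (hfmem v)
            exact h1.trans (h3 ▸ h2.reachable)
      haveI := hconn.nonempty
      have hTconn : T.Connected :=
        ⟨fun u v => (hreach u).trans (hreach v).symm⟩
      have hTtree : T.IsTree := ⟨hTconn, aux_acyclic f L x hdec⟩
      -- distance bounds
      have hdX : ∀ v ∈ X, T.dist v x ≤ 1 := by
        intro v hv
        by_cases hvx : v = x
        · rw [hvx, SimpleGraph.dist_self]; omega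
        · have h1 : T.Adj v x := hfX v hv ▸ hTadj v hvx
          calc T.dist v x ≤ (Walk.cons h1 Walk.nil).length := SimpleGraph.dist_le _
            _ = 1 := by simp
      have hdx : ∀ v, T.dist v x ≤ 2 := by
        intro v
        by_cases hvx : v = x
        · rw [hvx, SimpleGraph.dist_self]; omega
        · by_cases hfv : f v = x
          · have h1 : T.Adj v x := hfv ▸ hTadj v hvx
            have h2 : T.dist v x ≤ (Walk.cons h1 Walk.nil).length :=
              SimpleGraph.dist_le _
            simp only [Walk.length_cons, Walk.length_nil] at h2
            omega
          · have h1 : T.Adj v (f v) := hTadj v hvx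
            have h2 : T.Adj (f v) x := hfX (f v) (hfmem v) ▸ hTadj (f v) hfv
            calc T.dist v x ≤ (Walk.cons h1 (Walk.cons h2 Walk.nil)).length :=
                SimpleGraph.dist_le _
              _ = 2 := by simp
      refine ⟨T, hle, hTtree, ?_⟩
      intro u v huv
      have key : ∀ p q : V, G.Adj p q → p ∈ X → T.dist p q ≤ 3 := by
        intro p q hpq hpX
        have h1 : T.dist p q ≤ T.dist p x + T.dist x q := hTconn.dist_triangle
        have h2 : T.dist x q = T.dist q x := T.dist_comm
        have := hdX p hpX
        have := hdx q
        omega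
      rcases hmemXY u with huX | huY
      · exact key u v huv huX
      · rcases hmemXY v with hvX | hvY
        · rw [T.dist_comm]; exact key v u huv.symm hvX
        · exact absurd huv (hindep u huY v hvY)
  refine ⟨main, ?_⟩
  exact Nat.sInf_le ⟨by omega, main⟩
end
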